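/- arXiv:2304.10989 — 3 statements merged into one kernel-verified Lean document; each statement's English description precedes it below -/
import Mathlib

section
/- (Structure Theorem, with the explicit description of its ingredients.) For every integer s ≥ max{1, (n−2)(d−1)d}, the s-fold sumset decomposes as the disjoint union sA = C₁ ⊔ [c₁, sd−c₂] ⊔ (sd−C₂), where [c₁, sd−c₂] = {m ∈ ℤ : c₁ ≤ m ≤ sd−c₂} and sd−C₂ = {sd−c : c ∈ C₂}. -/
open scoped BigOperators

namespace SumsetsCurve

/-- The `s`-fold sumset of `A = {a 0, …, a (n-1)}`:
all sums of `s` elements of `A` (with `0A = {0}`). -/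
def sumset (n : ℕ) (a : ℕ → ℕ) (s : ℕ) : Set ℕ :=
  {x | ∃ f : Fin s → ℕ, (∀ i, f i < n) ∧ x = ∑ i, a (f i)}

/-- The numerical semigroup (additive submonoid of ℕ) generated by `B`. -/
def numSG (B : Set ℕ) : Set ℕ := (AddSubmonoid.closure B : AddSubmonoid ℕ)

/-- `S₁`, the numerical semigroup generated by `A`. -/
def S1 (n : ℕ) (a : ℕ → ℕ) : Set ℕ := numSG {x | ∃ i < n, a i = x}

/-- `S₂`, the numerical semigroup generated by `d - A`. -/
def S2 (n d : ℕ) (a : ℕ → ℕ) : Set ℕ := numSG {x | ∃ i < n, d - a i = x}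

/-- The conductor of `S ⊆ ℕ`: the least `c` with `c + ℕ ⊆ S`. -/
noncomputable def conductor (S : Set ℕ) : ℕ := sInf {c | ∀ m, c ≤ m → m ∈ S}

/-- The genus of `S ⊆ ℕ`: the number of gaps `|ℕ \ S|`. -/
noncomputable def genus (S : Set ℕ) : ℕ := Set.ncard {x : ℕ | x ∉ S}

/-- `C = S ∩ [0, conductor S - 2]` (the inequality is taken in ℤ). -/
def Cpart (S : Set ℕ) : Set ℕ := {x | x ∈ S ∧ (x : ℤ) ≤ (conductor S : ℤ) - 2}

/-- The decomposition `sA = C₁ ⊔ [c₁, sd - c₂] ⊔ (sd - C₂)` of the Structure Theorem,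
viewed inside ℤ. -/
def structDecomp (n d : ℕ) (a : ℕ → ℕ) (s : ℕ) : Prop :=
  (Nat.cast '' sumset n a s : Set ℤ)
      = (Nat.cast '' Cpart (S1 n a))
        ∪ Set.Icc ((conductor (S1 n a) : ℤ)) ((s * d : ℤ) - (conductor (S2 n d a) : ℤ))
        ∪ ((fun c => (s * d : ℤ) - c) '' (Nat.cast '' Cpart (S2 n d a)))
    ∧ Disjoint (Nat.cast '' Cpart (S1 n a) : Set ℤ)
        (Set.Icc ((conductor (S1 n a) : ℤ)) ((s * d : ℤ) - (conductor (S2 n d a) : ℤ)))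
    ∧ Disjoint (Nat.cast '' Cpart (S1 n a) : Set ℤ)
        ((fun c => (s * d : ℤ) - c) '' (Nat.cast '' Cpart (S2 n d a)))
    ∧ Disjoint
        (Set.Icc ((conductor (S1 n a) : ℤ)) ((s * d : ℤ) - (conductor (S2 n d a) : ℤ)))
        ((fun c => (s * d : ℤ) - c) '' (Nat.cast '' Cpart (S2 n d a)))

/-- `σ(A)`: the least `σ` such that the Structure Theorem decomposition holds
for all `s ≥ σ`. -/
noncomputable def sigmaA (n d : ℕ) (a : ℕ → ℕ) : ℕ :=
  sInf {σ | ∀ s, σ ≤ s → structDecomp n d a s}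

/-- `r(A)`: the least `r` such that `|sA| = sd + 1 - g₁ - g₂` for all `s ≥ r`
(the regularity of the Hilbert function of `k[C_A]`). -/
noncomputable def rA (n d : ℕ) (a : ℕ → ℕ) : ℕ :=
  sInf {r | ∀ s, r ≤ s →
    ((sumset n a s).ncard : ℤ)
      = (s : ℤ) * d + 1 - genus (S1 n a) - genus (S2 n d a)}

/-- The homogeneous semigroup `S ⊆ ℕ²` generated by `{(a, d-a) : a ∈ A}`. -/
def SS (n d : ℕ) (a : ℕ → ℕ) : Set (ℕ × ℕ) :=
  (AddSubmonoid.closure {p : ℕ × ℕ | ∃ i < n, p = (a i, d - a i)} : AddSubmonoid (ℕ × ℕ))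

/-- The Apery set `AP_S = {p ∈ S : p - (0,d) ∉ S, p - (d,0) ∉ S}`. -/
def APS (n d : ℕ) (a : ℕ → ℕ) : Set (ℕ × ℕ) :=
  {p ∈ SS n d a |
    (¬ ∃ q ∈ SS n d a, q + (0, d) = p) ∧ (¬ ∃ q ∈ SS n d a, q + (d, 0) = p)}

/-- The exceptional set
`E_S = {p ∈ S : p - (0,d) ∈ S, p - (d,0) ∈ S, p - (d,d) ∉ S}`. -/
def ES (n d : ℕ) (a : ℕ → ℕ) : Set (ℕ × ℕ) :=
  {p ∈ SS n d a |
    (∃ q ∈ SS n d a, q + (0, d) = p) ∧ (∃ q ∈ SS n d a, q + (d, 0) = p) ∧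
      (¬ ∃ q ∈ SS n d a, q + (d, d) = p)}

/-- The level `L_s = {(x,y) ∈ ℕ² : x + y = sd}`. -/
def Lev (d s : ℕ) : Set (ℕ × ℕ) := {p | p.1 + p.2 = s * d}

/-- `AP_s = AP_S ∩ L_s`. -/
def APs (n d : ℕ) (a : ℕ → ℕ) (s : ℕ) : Set (ℕ × ℕ) := APS n d a ∩ Lev d s

/-- `E_s = E_S ∩ L_s`. -/
def Es (n d : ℕ) (a : ℕ → ℕ) (s : ℕ) : Set (ℕ × ℕ) := ES n d a ∩ Lev d s

/-- `m(AP_S) = max {s : AP_s ≠ ∅}`. -/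
noncomputable def mAP (n d : ℕ) (a : ℕ → ℕ) : ℕ := sSup {s | APs n d a s ≠ ∅}

/-- The Apery set of `S₁` with respect to `d`: `{x ∈ S₁ : x - d ∉ S₁}`. -/
def Ap1 (n d : ℕ) (a : ℕ → ℕ) : Set ℕ := {x ∈ S1 n a | ¬ ∃ y ∈ S1 n a, y + d = x}

/-- The Apery set of `S₂` with respect to `d`: `{x ∈ S₂ : x - d ∉ S₂}`. -/
def Ap2 (n d : ℕ) (a : ℕ → ℕ) : Set ℕ := {x ∈ S2 n d a | ¬ ∃ y ∈ S2 n d a, y + d = x}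

/-- `G`, the subgroup of ℤ² generated by `S`. -/
def G (n d : ℕ) (a : ℕ → ℕ) : AddSubgroup (ℤ × ℤ) :=
  AddSubgroup.closure {p | ∃ i < n, p = ((a i : ℤ), (d : ℤ) - (a i : ℤ))}

/-- `S₁` viewed inside ℤ. -/
def S1Z (n : ℕ) (a : ℕ → ℕ) : Set ℤ := Nat.cast '' S1 n a

/-- `S₂` viewed inside ℤ. -/
def S2Z (n d : ℕ) (a : ℕ → ℕ) : Set ℤ := Nat.cast '' S2 n d a

/-- `S' = G ∩ (S₁ × S₂)`. -/
def Sprime (n d : ℕ) (a : ℕ → ℕ) : Set (ℤ × ℤ) :=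
  {p | p ∈ G n d a ∧ p.1 ∈ S1Z n a ∧ p.2 ∈ S2Z n d a}

/-- The homogeneous semigroup `S` viewed inside ℤ². -/
def SZ (n d : ℕ) (a : ℕ → ℕ) : Set (ℤ × ℤ) :=
  (fun p : ℕ × ℕ => ((p.1 : ℤ), (p.2 : ℤ))) '' SS n d a

/-!
For `s` large, `m ∈ sA` exactly when `m ≤ sd`, `m ∈ S₁` and `sd - m ∈ S₂`; the decomposition is
then read off from the conductors. The reflection `x ↦ sd - x` exchanges `A` and `d - A`, so it
suffices to put `m ∈ S₁` with `2m ≤ sd` into `sA`. A small such `m` is a sum of at most `m`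
nonzero generators, padded with copies of `0`. A large `m` is, by Bézout, congruent mod `d` to a
sum of at most `(n-2)(d-1)` of the generators `a₁, …, a_{n-2}`, and the difference is a multiple
of `d = a_{n-1}`; both parts together use at most `s` summands.
-/

section Sumset

variable {n d : ℕ} {b b' : ℕ → ℕ} {s t x y : ℕ}

theorem zero_mem_sumset_zero : 0 ∈ sumset n b 0 :=
  ⟨Fin.elim0, fun i => i.elim0, by simp⟩

theorem mem_sumset_one {i : ℕ} (hi : i < n) : b i ∈ sumset n b 1 :=
  ⟨fun _ => i, fun _ => hi, by simp⟩

theorem add_mem_sumset_add (hx : x ∈ sumset n b s) (hy : y ∈ sumset n b t) :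
    x + y ∈ sumset n b (s + t) := by
  obtain ⟨f, hf, rfl⟩ := hx
  obtain ⟨g, hg, rfl⟩ := hy
  refine ⟨Fin.append f g, fun i => Fin.addCases (by simpa using hf) (by simpa using hg) i, ?_⟩
  simp [Fin.sum_univ_add]

theorem mul_mem_sumset {i : ℕ} (hi : i < n) (c : ℕ) : c * b i ∈ sumset n b c := by
  induction c with
  | zero => simpa using zero_mem_sumset_zero
  | succ c ih => simpa [add_mul] using add_mem_sumset_add ih (mem_sumset_one hi)

theorem sum_mul_mem_sumset (T : Finset ℕ) (c : ℕ → ℕ) (hT : ∀ i ∈ T, i < n) :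
    ∑ i ∈ T, c i * b i ∈ sumset n b (∑ i ∈ T, c i) := by
  induction T using Finset.cons_induction with
  | empty => simpa using zero_mem_sumset_zero
  | cons i T hiT ih =>
    simp only [Finset.sum_cons]
    exact add_mem_sumset_add (mul_mem_sumset (hT i (T.mem_cons_self i)) (c i))
      (ih fun j hj => hT j (Finset.mem_cons_of_mem hj))

theorem sumset_mono_of_eq_zero {j : ℕ} (hj : j < n) (hbj : b j = 0) (hst : s ≤ t) :
    sumset n b s ⊆ sumset n b t := by
  intro x hx
  induction t, hst using Nat.le_induction with
  | base => exact hx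
  | succ t _ ih => simpa [hbj] using add_mem_sumset_add ih (mem_sumset_one hj)

theorem le_mul_of_mem_sumset (hb : ∀ i < n, b i ≤ d) (hx : x ∈ sumset n b s) : x ≤ s * d := by
  obtain ⟨f, hf, rfl⟩ := hx
  calc ∑ i, b (f i) ≤ ∑ _i : Fin s, d := Finset.sum_le_sum fun i _ => hb _ (hf i)
    _ = s * d := by simp

theorem sub_mem_sumset_of_add_eq (hbb' : ∀ i < n, b i + b' i = d) (hx : x ∈ sumset n b s) :
    s * d - x ∈ sumset n b' s := by
  obtain ⟨f, hf, rfl⟩ := hx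
  refine ⟨f, hf, ?_⟩
  have hsum : ∑ i, b (f i) + ∑ i, b' (f i) = s * d := by
    simp [← Finset.sum_add_distrib, hbb' _ (hf _)]
  omega

theorem sumset_subset_numSG : sumset n b s ⊆ numSG {x | ∃ i < n, b i = x} := by
  rintro _ ⟨f, hf, rfl⟩
  exact AddSubmonoid.sum_mem _ fun i _ => AddSubmonoid.subset_closure ⟨f i, hf i, rfl⟩

theorem exists_le_mem_sumset_of_mem_numSG (hx : x ∈ numSG {x | ∃ i < n, b i = x}) :
    ∃ k ≤ x, x ∈ sumset n b k := by
  induction hx using AddSubmonoid.closure_induction with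
  | mem y hy =>
    obtain ⟨i, hi, rfl⟩ := hy
    rcases Nat.eq_zero_or_pos (b i) with h | h
    · exact ⟨0, by omega, by rw [h]; exact zero_mem_sumset_zero⟩
    · exact ⟨1, h, mem_sumset_one hi⟩
  | zero => exact ⟨0, le_rfl, zero_mem_sumset_zero⟩
  | add y z _ _ ihy ihz =>
    obtain ⟨k, hk, hky⟩ := ihy
    obtain ⟨l, hl, hlz⟩ := ihz
    exact ⟨k + l, add_le_add hk hl, add_mem_sumset_add hky hlz⟩

end Sumset

section Conductor

variable {S : Set ℕ} {K m : ℕ}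

theorem conductor_le (h : ∀ m, K ≤ m → m ∈ S) : conductor S ≤ K :=
  Nat.sInf_le h

theorem mem_of_conductor_le (h : ∀ m, K ≤ m → m ∈ S) (hm : conductor S ≤ m) : m ∈ S :=
  Nat.sInf_mem (s := {c | ∀ m, c ≤ m → m ∈ S}) ⟨K, h⟩ m hm

theorem mem_Cpart_or_conductor_le (h : ∀ m, K ≤ m → m ∈ S) (hm : m ∈ S) :
    m ∈ Cpart S ∨ conductor S ≤ m := by
  by_cases hcm : conductor S ≤ m
  · exact .inr hcm
  have hgap : conductor S ≠ m + 1 := fun heq => hcm <| Nat.sInf_le fun m' hm' => by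
    rcases hm'.eq_or_lt with rfl | hlt
    · exact hm
    · exact mem_of_conductor_le h (by omega)
  exact .inl ⟨hm, by omega⟩

end Conductor

section Decomposition

theorem image_natCast_eq_of_mem_iff {X S₁ S₂ : Set ℕ} {N K₁ K₂ : ℕ}
    (hX : ∀ m, m ∈ X ↔ m ≤ N ∧ m ∈ S₁ ∧ N - m ∈ S₂)
    (h₁ : ∀ m, K₁ ≤ m → m ∈ S₁) (h₂ : ∀ m, K₂ ≤ m → m ∈ S₂)
    (hN : conductor S₁ + conductor S₂ ≤ N) :
    (Nat.cast '' X : Set ℤ) = Nat.cast '' Cpart S₁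
      ∪ Set.Icc (conductor S₁ : ℤ) (N - conductor S₂)
      ∪ (fun c => (N : ℤ) - c) '' (Nat.cast '' Cpart S₂) := by
  ext x
  simp only [Set.mem_union, Set.mem_image, Set.mem_Icc]
  constructor
  · rintro ⟨m, hm, rfl⟩
    obtain ⟨hmN, hm₁, hm₂⟩ := (hX m).1 hm
    rcases mem_Cpart_or_conductor_le h₁ hm₁ with hC₁ | hc₁
    · exact .inl (.inl ⟨m, hC₁, rfl⟩)
    rcases mem_Cpart_or_conductor_le h₂ hm₂ with hC₂ | hc₂
    · exact .inr ⟨_, ⟨N - m, hC₂, rfl⟩, by omega⟩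
    · exact .inl (.inr ⟨by exact_mod_cast hc₁, by omega⟩)
  · rintro ((⟨m, ⟨hm₁, hmc⟩, rfl⟩ | ⟨hx₁, hx₂⟩) | ⟨_, ⟨c, ⟨hc₂, hcc⟩, rfl⟩, rfl⟩)
    · exact ⟨m, (hX m).2 ⟨by omega, hm₁, mem_of_conductor_le h₂ (by omega)⟩, rfl⟩
    · lift x to ℕ using le_trans (Int.natCast_nonneg _) hx₁
      exact ⟨x, (hX x).2 ⟨by omega, mem_of_conductor_le h₁ (by omega),
        mem_of_conductor_le h₂ (by omega)⟩, rfl⟩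
    · refine ⟨N - c, (hX _).2 ⟨by omega, mem_of_conductor_le h₁ (by omega), ?_⟩, by omega⟩
      rwa [Nat.sub_sub_self (by omega)]

theorem disjoint_Cpart_Icc (S : Set ℕ) (u : ℤ) :
    Disjoint (Nat.cast '' Cpart S : Set ℤ) (Set.Icc (conductor S : ℤ) u) := by
  rw [Set.disjoint_left]
  rintro _ ⟨m, ⟨_, hm⟩, rfl⟩ ⟨hlo, _⟩
  omega

theorem disjoint_Icc_reflect_Cpart (S : Set ℕ) (l N : ℤ) :
    Disjoint (Set.Icc l (N - conductor S)) ((fun c => N - c) '' (Nat.cast '' Cpart S)) := by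
  rw [Set.disjoint_left]
  rintro _ ⟨_, hhi⟩ ⟨_, ⟨c, ⟨_, hc⟩, rfl⟩, rfl⟩
  simp only at hhi
  omega

theorem disjoint_Cpart_reflect_Cpart {S₁ S₂ : Set ℕ} {N : ℤ}
    (hN : (conductor S₁ + conductor S₂ : ℤ) ≤ N) :
    Disjoint (Nat.cast '' Cpart S₁ : Set ℤ) ((fun c => N - c) '' (Nat.cast '' Cpart S₂)) := by
  rw [Set.disjoint_left]
  rintro _ ⟨m, ⟨_, hm⟩, rfl⟩ ⟨_, ⟨c, ⟨_, hc⟩, rfl⟩, heq⟩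
  simp only at heq
  omega

theorem structDecomp_of_mem_sumset_iff {n d s K : ℕ} {a : ℕ → ℕ}
    (hsumset : ∀ m, m ∈ sumset n a s ↔ m ≤ s * d ∧ m ∈ S1 n a ∧ s * d - m ∈ S2 n d a)
    (h₁ : ∀ m, K ≤ m → m ∈ S1 n a) (h₂ : ∀ m, K ≤ m → m ∈ S2 n d a) (hK : 2 * K ≤ s * d) :
    structDecomp n d a s := by
  have hc : conductor (S1 n a) + conductor (S2 n d a) ≤ s * d := by
    linarith [conductor_le h₁, conductor_le h₂]
  refine ⟨?_, disjoint_Cpart_Icc _ _, disjoint_Cpart_reflect_Cpart (by exact_mod_cast hc),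
    disjoint_Icc_reflect_Cpart _ _ _⟩
  simpa using image_natCast_eq_of_mem_iff hsumset h₁ h₂ hc

end Decomposition

section Representation

variable {n d R s m : ℕ} {b : ℕ → ℕ}

theorem exists_mem_sumset_modEq (hd : 0 < d) {T : Finset ℕ} (hT : ∀ i ∈ T, i < n)
    {z : ℕ → ZMod d} (hz : ∑ i ∈ T, z i * b i = 1) (r : ℕ) :
    ∃ k ≤ T.card * (d - 1), ∃ w ∈ sumset n b k, w ≡ r [MOD d] := by
  have : NeZero d := ⟨hd.ne'⟩
  set c : ℕ → ℕ := fun i => (r * z i : ZMod d).val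
  refine ⟨∑ i ∈ T, c i, ?_, _, sum_mul_mem_sumset T c hT, ?_⟩
  · calc ∑ i ∈ T, c i ≤ ∑ _i ∈ T, (d - 1) :=
          Finset.sum_le_sum fun i _ => Nat.le_sub_one_of_lt (ZMod.val_lt _)
      _ = T.card * (d - 1) := by simp
  · rw [← ZMod.natCast_eq_natCast_iff]
    push_cast
    simp only [c, ZMod.natCast_zmod_val, mul_assoc, ← Finset.mul_sum, hz, mul_one]

theorem exists_mem_sumset_of_le (hres : ∀ r, ∃ k ≤ R, ∃ w ∈ sumset n b k, w ≡ r [MOD d])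
    (hb : ∀ i < n, b i ≤ d) (hbd : ∃ j < n, b j = d) (hm : R * d ≤ m) :
    ∃ k ≤ R, ∃ t, t * d ≤ m ∧ m ∈ sumset n b (k + t) := by
  obtain ⟨k, hk, w, hw, hwm⟩ := hres m
  have hwle : w ≤ m := (le_mul_of_mem_sumset hb hw).trans ((Nat.mul_le_mul_right d hk).trans hm)
  obtain ⟨t, ht⟩ := (Nat.modEq_iff_dvd' hwle).1 hwm
  obtain ⟨j, hj, hbj⟩ := hbd
  refine ⟨k, hk, t, by rw [mul_comm]; omega, ?_⟩
  have := add_mem_sumset_add hw (mul_mem_sumset (b := b) hj t)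
  rwa [hbj, mul_comm t, ← ht, Nat.add_sub_cancel' hwle] at this

theorem mem_numSG_of_le (hres : ∀ r, ∃ k ≤ R, ∃ w ∈ sumset n b k, w ≡ r [MOD d])
    (hb : ∀ i < n, b i ≤ d) (hbd : ∃ j < n, b j = d) (hm : R * d ≤ m) :
    m ∈ numSG {x | ∃ i < n, b i = x} := by
  obtain ⟨k, -, t, -, hmem⟩ := exists_mem_sumset_of_le hres hb hbd hm
  exact sumset_subset_numSG hmem

theorem mem_sumset_of_mem_numSG (hres : ∀ r, ∃ k ≤ R, ∃ w ∈ sumset n b k, w ≡ r [MOD d])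
    (hb : ∀ i < n, b i ≤ d) (hb0 : ∃ j < n, b j = 0) (hbd : ∃ j < n, b j = d)
    (hd : 2 ≤ d) (hs : R * d ≤ s) (hm : m ∈ numSG {x | ∃ i < n, b i = x})
    (h2m : 2 * m ≤ s * d) : m ∈ sumset n b s := by
  obtain ⟨j, hj, hbj⟩ := hb0
  rcases le_or_gt m (R * d) with hmR | hmR
  · obtain ⟨k, hk, hmk⟩ := exists_le_mem_sumset_of_mem_numSG hm
    exact sumset_mono_of_eq_zero hj hbj (by omega) hmk
  · obtain ⟨k, hk, t, htm, hmkt⟩ := exists_mem_sumset_of_le hres hb hbd hmR.le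
    refine sumset_mono_of_eq_zero hj hbj ?_ hmkt
    -- the residue part has at most `R ≤ s / 2` summands, and the `t` copies of `d` sum to
    -- at most `m ≤ s d / 2`
    have h2k : 2 * k ≤ s := by nlinarith
    have h2t : 2 * t ≤ s := Nat.le_of_mul_le_mul_right (by nlinarith) (by omega : 0 < d)
    omega

theorem mem_sumset_iff (hres : ∀ r, ∃ k ≤ R, ∃ w ∈ sumset n b k, w ≡ r [MOD d])
    (hres' : ∀ r, ∃ k ≤ R, ∃ w ∈ sumset n (fun i => d - b i) k, w ≡ r [MOD d])
    (hb : ∀ i < n, b i ≤ d) (hb0 : ∃ j < n, b j = 0) (hbd : ∃ j < n, b j = d)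
    (hd : 2 ≤ d) (hs : R * d ≤ s) :
    m ∈ sumset n b s ↔ m ≤ s * d ∧ m ∈ numSG {x | ∃ i < n, b i = x} ∧
      s * d - m ∈ numSG {x | ∃ i < n, d - b i = x} := by
  have hcompl : ∀ i < n, b i + (d - b i) = d := fun i hi => Nat.add_sub_cancel' (hb i hi)
  have hcompl' : ∀ i < n, (d - b i) + b i = d := fun i hi => Nat.sub_add_cancel (hb i hi)
  constructor
  · intro hm
    exact ⟨le_mul_of_mem_sumset hb hm, sumset_subset_numSG hm,
      sumset_subset_numSG (sub_mem_sumset_of_add_eq hcompl hm)⟩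
  · rintro ⟨hmN, hm, hm'⟩
    rcases le_total (2 * m) (s * d) with h | h
    · exact mem_sumset_of_mem_numSG hres hb hb0 hbd hd hs hm h
    obtain ⟨j₀, hj₀, hbj₀⟩ := hb0
    obtain ⟨j₁, hj₁, hbj₁⟩ := hbd
    have hdual := mem_sumset_of_mem_numSG hres' (fun i _ => Nat.sub_le d (b i))
      ⟨j₁, hj₁, by simp [hbj₁]⟩ ⟨j₀, hj₀, by simp [hbj₀]⟩ hd hs hm' (by omega)
    simpa [Nat.sub_sub_self hmN] using sub_mem_sumset_of_add_eq hcompl' hdual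

end Representation

section NormalForm

theorem exists_sum_mul_eq_one_of_gcd_eq_one {ι : Type*} (T : Finset ι) (f : ι → ℕ)
    (h : T.gcd f = 1) : ∃ z : ι → ℤ, ∑ i ∈ T, z i * f i = 1 := by
  obtain ⟨g, hg⟩ := T.gcd_eq_sum_mul fun i => (f i : ℤ)
  have hunit : IsUnit (T.gcd fun i => (f i : ℤ)) := by
    rw [Int.isUnit_iff_natAbs_eq, ← Nat.dvd_one, ← h]
    exact Finset.dvd_gcd fun i hi => Int.natAbs_dvd_natAbs.mpr (Finset.gcd_dvd hi)
  refine ⟨fun i => g i * T.gcd fun i => (f i : ℤ), ?_⟩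
  calc ∑ i ∈ T, g i * (T.gcd fun i => (f i : ℤ)) * f i
      = (∑ i ∈ T, (f i : ℤ) * g i) * T.gcd fun i => (f i : ℤ) := by
        rw [Finset.sum_mul]
        exact Finset.sum_congr rfl fun i _ => by ring
    _ = (T.gcd fun i => (f i : ℤ)) * T.gcd fun i => (f i : ℤ) := by rw [← hg]
    _ = 1 := Int.isUnit_mul_self hunit

theorem exists_zmod_sum_mul_eq_one {n d : ℕ} {a : ℕ → ℕ} (hn : 2 ≤ n) (had : a (n - 1) = d)
    (hgcd : (Finset.Icc 1 (n - 1)).gcd a = 1) :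
    ∃ z : ℕ → ZMod d, ∑ i ∈ Finset.Icc 1 (n - 2), z i * a i = 1 := by
  obtain ⟨z, hz⟩ := exists_sum_mul_eq_one_of_gcd_eq_one _ a hgcd
  rw [show n - 1 = n - 2 + 1 by omega, Finset.sum_Icc_succ_top (by omega),
    show n - 2 + 1 = n - 1 by omega, had] at hz
  refine ⟨fun i => z i, ?_⟩
  simpa using congrArg (Int.cast : ℤ → ZMod d) hz

end NormalForm

/-- **Structure Theorem** (Nathanson): for every `s ≥ max{1, (n-2)(d-1)d}`, the sumset `sA`
decomposes as the disjoint union `C₁ ⊔ [c₁, sd-c₂] ⊔ (sd - C₂)`. -/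
theorem structure_theorem (n d : ℕ) (a : ℕ → ℕ)
    (hn : 4 ≤ n)
    (ha0 : a 0 = 0)
    (had : a (n - 1) = d)
    (hmono : ∀ i j, i < j → j ≤ n - 1 → a i < a j)
    (hgcd : (Finset.Icc 1 (n - 1)).gcd a = 1) :
    ∀ s : ℕ, max 1 ((n - 2) * (d - 1) * d) ≤ s → structDecomp n d a s := by
  intro s hs
  have hle : ∀ i < n, a i ≤ d := fun i hi => by
    rcases (show i ≤ n - 1 by omega).eq_or_lt with rfl | hlt
    · exact had.le
    · exact had ▸ (hmono i (n - 1) hlt le_rfl).le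
  have hd : 2 ≤ d := by
    have := hmono 0 1 (by omega) (by omega)
    have := hmono 1 (n - 1) (by omega) le_rfl
    omega
  have hT : ∀ i ∈ Finset.Icc 1 (n - 2), i < n := fun i hi => by
    rw [Finset.mem_Icc] at hi; omega
  obtain ⟨z, hz⟩ := exists_zmod_sum_mul_eq_one (by omega) had hgcd
  have hz' : ∑ i ∈ Finset.Icc 1 (n - 2), -z i * ((d - a i : ℕ) : ZMod d) = 1 := by
    rw [← hz]
    refine Finset.sum_congr rfl fun i hi => ?_
    rw [Nat.cast_sub (hle i (hT i hi)), ZMod.natCast_self]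
    ring
  have hres := exists_mem_sumset_modEq (by omega) hT hz
  have hres' := exists_mem_sumset_modEq (b := fun i => d - a i) (by omega) hT hz'
  simp only [Nat.card_Icc, Nat.add_sub_cancel] at hres hres'
  have hsK : (n - 2) * (d - 1) * d ≤ s := le_of_max_le_right hs
  exact structDecomp_of_mem_sumset_iff
    (fun m => mem_sumset_iff hres hres' hle ⟨0, by omega, ha0⟩ ⟨n - 1, by omega, had⟩ hd hsK)
    (fun m => mem_numSG_of_le hres hle ⟨n - 1, by omega, had⟩)
    (fun m => mem_numSG_of_le hres' (fun i _ => Nat.sub_le d (a i)) ⟨0, by omega, by simp [ha0]⟩)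
    (by nlinarith)

end SumsetsCurve
end

section
/- For all i = 1, …, d−1 the following hold: (1) if (r_i, t_{d−i}) ∈ S, then (r_i, t_{d−i}) ∈ AP_S; (2) if (r_i, t_{d−i}) ∉ S, then (r_i, t_{d−i}) ∉ AP_S and there exist natural numbers x > r_i and y > t_{d−i} such that (x, t_{d−i}) ∈ AP_S and (r_i, y) ∈ AP_S. -/
open scoped BigOperators

namespace SumsetsCurve

/-!
The projections of `S` onto the two coordinates are `S₁` and `S₂`, and every point of `S` lies
on a level `x + y ≡ 0 (mod d)`. So a point of `S` whose coordinates lie in `Ap₁` and `Ap₂` cannot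
be lowered by `(d,0)` or `(0,d)` inside `S`. If `(rᵢ, t_{d-i}) ∉ S`, the least `x` with
`(x, t_{d-i}) ∈ S` gives a point of `AP_S`; it is `≡ i (mod d)`, so the minimality of `rᵢ` in its
residue class forces `x > rᵢ`. The same argument works in the second coordinate.
-/

theorem le_of_modEq_of_not_exists_add_eq {M : AddSubmonoid ℕ} {d u z : ℕ}
    (hd : d ∈ M) (hu : ¬ ∃ y ∈ M, y + d = u) (hz : z ∈ M) (hzu : z ≡ u [MOD d]) : u ≤ z := by
  by_contra! hlt
  obtain ⟨k, hk⟩ := (Nat.modEq_iff_dvd' hlt.le).mp hzu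
  rcases k with _ | m
  · omega
  refine hu ⟨z + m • d, add_mem hz (M.nsmul_mem hd m), ?_⟩
  rw [smul_eq_mul]
  have : d * (m + 1) = m * d + d := by ring
  omega

variable {n d : ℕ} {a : ℕ → ℕ}

theorem image_fst_SS : Prod.fst '' SS n d a = S1 n a := by
  change AddMonoidHom.fst ℕ ℕ '' SS n d a = _
  rw [SS, ← AddSubmonoid.coe_map, AddMonoidHom.map_mclosure]
  congr 2
  ext x
  simp [eq_comm]

theorem image_snd_SS : Prod.snd '' SS n d a = S2 n d a := by
  change AddMonoidHom.snd ℕ ℕ '' SS n d a = _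
  rw [SS, ← AddSubmonoid.coe_map, AddMonoidHom.map_mclosure]
  congr 2
  ext x
  simp [eq_comm]

theorem fst_mem_S1_of_mem_SS {p : ℕ × ℕ} (hp : p ∈ SS n d a) : p.1 ∈ S1 n a :=
  image_fst_SS ▸ Set.mem_image_of_mem _ hp

theorem snd_mem_S2_of_mem_SS {p : ℕ × ℕ} (hp : p ∈ SS n d a) : p.2 ∈ S2 n d a :=
  image_snd_SS ▸ Set.mem_image_of_mem _ hp

theorem dvd_add_of_mem_SS (hle : ∀ i < n, a i ≤ d) {p : ℕ × ℕ} (hp : p ∈ SS n d a) :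
    d ∣ p.1 + p.2 := by
  induction hp using AddSubmonoid.closure_induction with
  | mem q hq =>
    obtain ⟨i, hi, rfl⟩ := hq
    simp [Nat.add_sub_cancel' (hle i hi)]
  | zero => simp
  | add p q _ _ hp hq => simpa [add_add_add_comm] using dvd_add hp hq

variable {x y : ℕ}

theorem not_exists_add_fst_eq_of_mem_Ap1 (hx : x ∈ Ap1 n d a) :
    ¬ ∃ q ∈ SS n d a, q + (d, 0) = (x, y) := by
  rintro ⟨q, hq, hqxy⟩
  exact hx.2 ⟨q.1, fst_mem_S1_of_mem_SS hq, congrArg Prod.fst hqxy⟩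

theorem not_exists_add_snd_eq_of_mem_Ap2 (hy : y ∈ Ap2 n d a) :
    ¬ ∃ q ∈ SS n d a, q + (0, d) = (x, y) := by
  rintro ⟨q, hq, hqxy⟩
  exact hy.2 ⟨q.2, snd_mem_S2_of_mem_SS hq, congrArg Prod.snd hqxy⟩

theorem mem_APS_of_mem_Ap1_of_mem_Ap2 (hp : (x, y) ∈ SS n d a) (hx : x ∈ Ap1 n d a)
    (hy : y ∈ Ap2 n d a) : (x, y) ∈ APS n d a :=
  ⟨hp, not_exists_add_snd_eq_of_mem_Ap2 hy, not_exists_add_fst_eq_of_mem_Ap1 hx⟩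

theorem mem_APS_of_forall_fst_le (hd : 0 < d) (hp : (x, y) ∈ SS n d a) (hy : y ∈ Ap2 n d a)
    (hmin : ∀ x', (x', y) ∈ SS n d a → x ≤ x') : (x, y) ∈ APS n d a := by
  refine ⟨hp, not_exists_add_snd_eq_of_mem_Ap2 hy, ?_⟩
  rintro ⟨q, hq, hqxy⟩
  have hq2 : q.2 = y := by simpa using congrArg Prod.snd hqxy
  have := hmin q.1 (hq2 ▸ hq)
  have := congrArg Prod.fst hqxy
  simp only [Prod.fst_add] at this
  omega

theorem mem_APS_of_forall_snd_le (hd : 0 < d) (hp : (x, y) ∈ SS n d a) (hx : x ∈ Ap1 n d a)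
    (hmin : ∀ y', (x, y') ∈ SS n d a → y ≤ y') : (x, y) ∈ APS n d a := by
  refine ⟨hp, ?_, not_exists_add_fst_eq_of_mem_Ap1 hx⟩
  rintro ⟨q, hq, hqxy⟩
  have hq1 : q.1 = x := by simpa using congrArg Prod.fst hqxy
  have := hmin q.2 (hq1 ▸ hq)
  have := congrArg Prod.snd hqxy
  simp only [Prod.snd_add] at this
  omega

theorem modEq_of_dvd_add_of_dvd_add {d x x' y : ℕ} (h : d ∣ x + y) (h' : d ∣ x' + y) :
    x' ≡ x [MOD d] :=
  Nat.ModEq.add_right_cancel' y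
    ((Nat.modEq_zero_iff_dvd.2 h').trans (Nat.modEq_zero_iff_dvd.2 h).symm)

theorem exists_lt_fst_mem_APS (hd : 0 < d) (hle : ∀ i < n, a i ≤ d) (hdS1 : d ∈ S1 n a)
    (hx : x ∈ Ap1 n d a) (hy : y ∈ Ap2 n d a) (hxy : d ∣ x + y) (hnot : (x, y) ∉ SS n d a) :
    ∃ x', x < x' ∧ (x', y) ∈ APS n d a := by
  classical
  have hlift : ∃ x', (x', y) ∈ SS n d a := by
    obtain ⟨p, hp, rfl⟩ := image_snd_SS (n := n) (d := d) (a := a) ▸ hy.1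
    exact ⟨p.1, hp⟩
  have hx' : (Nat.find hlift, y) ∈ SS n d a := Nat.find_spec hlift
  have hle' : x ≤ Nat.find hlift :=
    le_of_modEq_of_not_exists_add_eq (M := AddSubmonoid.closure _) hdS1 hx.2
      (fst_mem_S1_of_mem_SS hx')
      (modEq_of_dvd_add_of_dvd_add hxy (dvd_add_of_mem_SS hle hx'))
  refine ⟨_, hle'.lt_of_ne fun h => hnot (h ▸ hx'),
    mem_APS_of_forall_fst_le hd hx' hy fun _ h => Nat.find_min' hlift h⟩

theorem exists_lt_snd_mem_APS (hd : 0 < d) (hle : ∀ i < n, a i ≤ d) (hdS2 : d ∈ S2 n d a)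
    (hx : x ∈ Ap1 n d a) (hy : y ∈ Ap2 n d a) (hxy : d ∣ x + y) (hnot : (x, y) ∉ SS n d a) :
    ∃ y', y < y' ∧ (x, y') ∈ APS n d a := by
  classical
  have hlift : ∃ y', (x, y') ∈ SS n d a := by
    obtain ⟨p, hp, rfl⟩ := image_fst_SS (n := n) (d := d) (a := a) ▸ hx.1
    exact ⟨p.2, hp⟩
  have hy' : (x, Nat.find hlift) ∈ SS n d a := Nat.find_spec hlift
  have hle' : y ≤ Nat.find hlift :=
    le_of_modEq_of_not_exists_add_eq (M := AddSubmonoid.closure _) hdS2 hy.2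
      (snd_mem_S2_of_mem_SS hy')
      (modEq_of_dvd_add_of_dvd_add (add_comm x y ▸ hxy)
        (add_comm x _ ▸ dvd_add_of_mem_SS hle hy'))
  refine ⟨_, hle'.lt_of_ne fun h => hnot (h ▸ hy'),
    mem_APS_of_forall_snd_le hd hy' hx fun _ h => Nat.find_min' hlift h⟩

theorem lemma_CMchar_general (n d : ℕ) (a : ℕ → ℕ)
    (hn : 4 ≤ n)
    (ha0 : a 0 = 0)
    (had : a (n - 1) = d)
    (hmono : ∀ i j, i < j → j ≤ n - 1 → a i < a j)
    (r t : ℕ → ℕ)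
    (hr : ∀ i < d, r i ∈ Ap1 n d a ∧ r i % d = i % d)
    (ht : ∀ i < d, t i ∈ Ap2 n d a ∧ t i % d = i % d) :
    ∀ i : ℕ, 1 ≤ i → i ≤ d - 1 →
      ((r i, t (d - i)) ∈ SS n d a → (r i, t (d - i)) ∈ APS n d a)
      ∧ ((r i, t (d - i)) ∉ SS n d a →
          (r i, t (d - i)) ∉ APS n d a
          ∧ (∃ x : ℕ, r i < x ∧ (x, t (d - i)) ∈ APS n d a)
          ∧ (∃ y : ℕ, t (d - i) < y ∧ (r i, y) ∈ APS n d a)) := by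
  intro i hi hid
  have hd : 0 < d := by omega
  have hle : ∀ j < n, a j ≤ d := fun j hj => by
    rcases (Nat.le_sub_one_of_lt hj).lt_or_eq with h | rfl
    · exact had ▸ (hmono j (n - 1) h le_rfl).le
    · exact had.le
  have hdS1 : d ∈ S1 n a := AddSubmonoid.subset_closure ⟨n - 1, by omega, had⟩
  have hdS2 : d ∈ S2 n d a := AddSubmonoid.subset_closure ⟨0, by omega, by rw [ha0, Nat.sub_zero]⟩
  obtain ⟨hri, hrm⟩ := hr i (by omega)
  obtain ⟨hti, htm⟩ := ht (d - i) (by omega)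
  have hsum : d ∣ r i + t (d - i) := Nat.dvd_of_mod_eq_zero <| by
    rw [Nat.add_mod, hrm, htm, ← Nat.add_mod, Nat.add_sub_cancel' (by omega), Nat.mod_self]
  exact ⟨fun hp => mem_APS_of_mem_Ap1_of_mem_Ap2 hp hri hti, fun hp =>
    ⟨fun h => hp h.1, exists_lt_fst_mem_APS hd hle hdS1 hri hti hsum hp,
      exists_lt_snd_mem_APS hd hle hdS2 hri hti hsum hp⟩⟩

/-- For all `i = 1, …, d-1`: (1) if `(rᵢ, t_{d-i}) ∈ S` then `(rᵢ, t_{d-i}) ∈ AP_S`;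
(2) if `(rᵢ, t_{d-i}) ∉ S` then `(rᵢ, t_{d-i}) ∉ AP_S` and there exist `x > rᵢ` and
`y > t_{d-i}` with `(x, t_{d-i}) ∈ AP_S` and `(rᵢ, y) ∈ AP_S`. -/
theorem lemma_CMchar (n d : ℕ) (a : ℕ → ℕ)
    (hn : 4 ≤ n)
    (ha0 : a 0 = 0)
    (had : a (n - 1) = d)
    (hmono : ∀ i j, i < j → j ≤ n - 1 → a i < a j)
    (hgcd : (Finset.Icc 1 (n - 1)).gcd a = 1)
    (r t : ℕ → ℕ)
    (hr : ∀ i < d, r i ∈ Ap1 n d a ∧ r i % d = i % d)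
    (ht : ∀ i < d, t i ∈ Ap2 n d a ∧ t i % d = i % d) :
    ∀ i : ℕ, 1 ≤ i → i ≤ d - 1 →
      ((r i, t (d - i)) ∈ SS n d a → (r i, t (d - i)) ∈ APS n d a)
      ∧ ((r i, t (d - i)) ∉ SS n d a →
          (r i, t (d - i)) ∉ APS n d a
          ∧ (∃ x : ℕ, r i < x ∧ (x, t (d - i)) ∈ APS n d a)
          ∧ (∃ y : ℕ, t (d - i) < y ∧ (r i, y) ∈ APS n d a)) :=
  lemma_CMchar_general n d a hn ha0 had hmono r t hr ht

end SumsetsCurve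
end

section
/- The Apery set AP_S and the exceptional set E_S of the homogeneous semigroup S are finite, and |AP_S| = |E_S| + d; in particular |AP_S| ≥ d. -/
open scoped BigOperators

namespace SumsetsCurve

section Aux
open Finset

structure Hyp (n d : ℕ) (a : ℕ → ℕ) : Prop where
  hn : 4 ≤ n
  ha0 : a 0 = 0
  had : a (n-1) = d
  hmono : ∀ i j, i < j → j ≤ n - 1 → a i < a j
  hgcd : (Finset.Icc 1 (n - 1)).gcd a = 1

namespace Hyp

variable {n d : ℕ} {a : ℕ → ℕ} (H : Hyp n d a)
include H

lemma npos : 0 < n := by have := H.hn; omega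

lemma dpos : 0 < d := by
  have h := H.hmono 0 (n-1) (by have := H.hn; omega) le_rfl
  rw [H.ha0, H.had] at h; exact h

lemma ale {i : ℕ} (hi : i < n) : a i ≤ d := by
  rcases eq_or_lt_of_le (Nat.le_sub_one_of_lt hi) with h | h
  · rw [h, H.had]
  · have := H.hmono i (n-1) h le_rfl
    rw [H.had] at this; exact this.le

lemma apos {i : ℕ} (h0 : 0 < i) (hi : i < n) : 0 < a i := by
  have := H.hmono 0 i h0 (Nat.le_sub_one_of_lt hi)
  rw [H.ha0] at this; exact this

lemma alt {i : ℕ} (h1 : 1 ≤ i) (hi : i < n - 1) : a i < d := by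
  have := H.hmono i (n-1) hi le_rfl
  rw [H.had] at this; exact this

/-! ### basic sumset lemmas -/

omit H in lemma mem_sumset_zero {x : ℕ} : x ∈ sumset n a 0 ↔ x = 0 := by
  constructor
  · rintro ⟨f, -, rfl⟩; simp
  · rintro rfl; exact ⟨Fin.elim0, fun i => i.elim0, by simp⟩

omit H in lemma zero_mem_zero : (0 : ℕ) ∈ sumset n a 0 := mem_sumset_zero.2 rfl

omit H in lemma add_mem {x y s t : ℕ} (hx : x ∈ sumset n a s) (hy : y ∈ sumset n a t) :
    x + y ∈ sumset n a (s + t) := by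
  obtain ⟨f, hf, rfl⟩ := hx
  obtain ⟨g, hg, rfl⟩ := hy
  refine ⟨Fin.addCases f g, fun i => ?_, ?_⟩
  · refine Fin.addCases (motive := fun i => Fin.addCases f g i < n) (fun i => ?_) (fun j => ?_) i
    · simpa using hf i
    · simpa using hg j
  · rw [Fin.sum_univ_add]
    simp [Fin.addCases_left, Fin.addCases_right]

omit H in lemma single_mem {j : ℕ} (hj : j < n) : a j ∈ sumset n a 1 :=
  ⟨fun _ => j, fun _ => hj, by simp⟩

omit H in lemma nsmul_single {j : ℕ} (hj : j < n) (k : ℕ) : k * a j ∈ sumset n a k := by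
  induction k with
  | zero => simpa using (mem_sumset_zero (n := n) (a := a)).2 rfl
  | succ k ih =>
      have := add_mem ih (single_mem hj)
      simpa [Nat.succ_mul] using this

lemma mono_succ {x s : ℕ} (hx : x ∈ sumset n a s) : x ∈ sumset n a (s + 1) := by
  have := add_mem hx (single_mem H.npos)
  simpa [H.ha0] using this

lemma mono {x s t : ℕ} (hst : s ≤ t) (hx : x ∈ sumset n a s) : x ∈ sumset n a t := by
  induction t with
  | zero => simpa [Nat.le_zero.1 hst] using hx
  | succ t ih =>
      rcases Nat.lt_or_ge s (t+1) with h | h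
      · exact H.mono_succ (ih (by omega))
      · simpa [show s = t + 1 by omega] using hx

lemma shift_mem {x s : ℕ} (hx : x ∈ sumset n a s) : x + d ∈ sumset n a (s + 1) := by
  have := add_mem hx (single_mem (show n - 1 < n by have := H.npos; omega))
  simpa [H.had] using this

lemma le_bound {x s : ℕ} (hx : x ∈ sumset n a s) : x ≤ s * d := by
  obtain ⟨f, hf, rfl⟩ := hx
  calc ∑ i, a (f i) ≤ ∑ _i : Fin s, d := Finset.sum_le_sum fun i _ => H.ale (hf i)
    _ = s * d := by simp [Finset.sum_const, mul_comm]

lemma sd_mem (s : ℕ) : s * d ∈ sumset n a s := by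
  have := nsmul_single (a := a) (show n - 1 < n by have := H.npos; omega) s
  rwa [H.had] at this


/-! ### multiplicity representations -/

omit H in
lemma mem_of_finsum {F : Finset ℕ} (hF : ∀ i ∈ F, i < n) (c : ℕ → ℕ) :
    (∑ i ∈ F, c i * a i) ∈ sumset n a (∑ i ∈ F, c i) := by
  classical
  induction F using Finset.induction_on with
  | empty => simpa using (mem_sumset_zero (n := n) (a := a)).2 rfl
  | @insert j F' hj ih =>
      rw [Finset.sum_insert hj, Finset.sum_insert hj]
      exact add_mem (nsmul_single (hF j (Finset.mem_insert_self j F')) (c j))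
        (ih fun i hi => hF i (Finset.mem_insert_of_mem hi))

omit H in lemma rep_of_mem {x s : ℕ} (hx : x ∈ sumset n a s) :
    ∃ c : ℕ → ℕ, (∀ i, n ≤ i → c i = 0) ∧ (∑ i ∈ Finset.range n, c i) = s ∧
      (∑ i ∈ Finset.range n, c i * a i) = x := by
  classical
  obtain ⟨f, hf, rfl⟩ := hx
  refine ⟨fun j => (Finset.univ.filter fun i => f i = j).card, fun i hi => ?_, ?_, ?_⟩
  · rw [Finset.card_eq_zero, Finset.filter_eq_empty_iff]
    intro k _ hk; exact absurd (hk ▸ hf k) (by omega)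
  · rw [← Finset.card_eq_sum_card_fiberwise fun i _ => Finset.mem_range.2 (hf i)]
    simp
  · rw [← Finset.sum_fiberwise_of_maps_to (fun i _ => Finset.mem_range.2 (hf i)) (fun i => a (f i))]
    refine Finset.sum_congr rfl fun j _ => ?_
    rw [Finset.sum_congr rfl (fun i hi => by rw [(Finset.mem_filter.1 hi).2]),
      Finset.sum_const, smul_eq_mul]

omit H in
/-- splitting off two indices 0 ≤ j < n-1 and n-1 from a multiplicity sum -/
lemma sum_split {j : ℕ} (hj : j < n - 1) (g : ℕ → ℕ) (hn : 0 < n) :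
    ∑ i ∈ Finset.range n, g i
      = g j + g (n-1) + ∑ i ∈ ((Finset.range n).erase j).erase (n-1), g i := by
  classical
  have h1 : (n-1) ∈ (Finset.range n).erase j :=
    Finset.mem_erase.2 ⟨by omega, Finset.mem_range.2 (by omega)⟩
  have h2 : j ∈ Finset.range n := Finset.mem_range.2 (by omega)
  rw [← Finset.add_sum_erase _ g h2, ← Finset.add_sum_erase _ g h1]
  ring

/-! ### minimal length representations -/

end Hyp

/-- minimal number of summands representing `x` -/
noncomputable def ell (n : ℕ) (a : ℕ → ℕ) (x : ℕ) : ℕ := sInf {s | x ∈ sumset n a s}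

namespace Hyp

variable {n d : ℕ} {a : ℕ → ℕ} (H : Hyp n d a)
include H

omit H in
lemma ell_mem {x s : ℕ} (hx : x ∈ sumset n a s) : x ∈ sumset n a (ell n a x) := by
  have h : ell n a x ∈ {s | x ∈ sumset n a s} :=
    Nat.sInf_mem (⟨s, hx⟩ : Set.Nonempty {s | x ∈ sumset n a s})
  exact h

omit H in
lemma ell_le {x s : ℕ} (hx : x ∈ sumset n a s) : ell n a x ≤ s :=
  Nat.sInf_le (show s ∈ {t | x ∈ sumset n a t} from hx)

lemma drop_zero {c : ℕ → ℕ} {s x : ℕ}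
    (hs : ∑ i ∈ Finset.range n, c i = s) (hx : ∑ i ∈ Finset.range n, c i * a i = x)
    (h0 : 1 ≤ c 0) : x ∈ sumset n a (s - 1) := by
  classical
  have h0m : (0:ℕ) ∈ Finset.range n := Finset.mem_range.2 H.npos
  have hx' : ∑ i ∈ (Finset.range n).erase 0, c i * a i = x := by
    rw [← Finset.add_sum_erase _ _ h0m] at hx
    simpa [H.ha0] using hx
  have hs' : c 0 + ∑ i ∈ (Finset.range n).erase 0, c i = s := by
    rw [← Finset.add_sum_erase _ _ h0m] at hs; exact hs
  have hm := mem_of_finsum (n := n) (a := a) (F := (Finset.range n).erase 0)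
    (fun i hi => Finset.mem_range.1 (Finset.mem_of_mem_erase hi)) c
  rw [hx'] at hm
  exact H.mono (by omega) hm

lemma drop_d {c : ℕ → ℕ} {s x : ℕ}
    (hs : ∑ i ∈ Finset.range n, c i = s) (hx : ∑ i ∈ Finset.range n, c i * a i = x)
    (h0 : 1 ≤ c (n-1)) : ∃ y ∈ sumset n a (s - 1), y + d = x := by
  classical
  have h0m : (n-1:ℕ) ∈ Finset.range n := Finset.mem_range.2 (by have := H.npos; omega)
  have hx' : c (n-1) * d + ∑ i ∈ (Finset.range n).erase (n-1), c i * a i = x := by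
    rw [← Finset.add_sum_erase _ _ h0m, H.had] at hx; exact hx
  have hs' : c (n-1) + ∑ i ∈ (Finset.range n).erase (n-1), c i = s := by
    rw [← Finset.add_sum_erase _ _ h0m] at hs; exact hs
  set t := ∑ i ∈ (Finset.range n).erase (n-1), c i with ht
  have hn1 : n - 1 < n := by have := H.npos; omega
  have hm1 : (c (n-1) - 1) * d ∈ sumset n a (c (n-1) - 1) := by
    have := nsmul_single (a := a) hn1 (c (n-1) - 1)
    rwa [H.had] at this
  have hm2 := mem_of_finsum (n := n) (a := a) (F := (Finset.range n).erase (n-1))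
    (fun i hi => Finset.mem_range.1 (Finset.mem_of_mem_erase hi)) c
  have hmem : (c (n-1) - 1) * d + ∑ i ∈ (Finset.range n).erase (n-1), c i * a i
      ∈ sumset n a ((c (n-1) - 1) + t) := add_mem hm1 hm2
  refine ⟨_, H.mono (by omega) hmem, ?_⟩
  have hd1 : (c (n-1) - 1) * d + d = c (n-1) * d := by
    obtain ⟨m, hm⟩ : ∃ m, c (n-1) = m + 1 := ⟨c (n-1) - 1, by omega⟩
    rw [hm, Nat.add_sub_cancel, Nat.succ_mul]
  omega

lemma reduce {c : ℕ → ℕ} {j s x : ℕ} (hj1 : 1 ≤ j) (hj2 : j < n - 1)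
    (hs : ∑ i ∈ Finset.range n, c i = s) (hx : ∑ i ∈ Finset.range n, c i * a i = x)
    (hcj : d ≤ c j) : x ∈ sumset n a (s + a j - d) := by
  classical
  set E := ((Finset.range n).erase j).erase (n-1) with hE
  have hsplitx : x = c j * a j + c (n-1) * d + ∑ i ∈ E, c i * a i := by
    have h := sum_split (n := n) hj2 (fun i => c i * a i) H.npos
    rw [hx] at h
    simpa [H.had, hE] using h
  have hsplits : s = c j + c (n-1) + ∑ i ∈ E, c i := by
    have h := sum_split (n := n) hj2 c H.npos
    rw [hs] at h
    simpa [hE] using h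
  have hEsub : ∀ i ∈ E, i < n := fun i hi =>
    Finset.mem_range.1 (Finset.mem_of_mem_erase (Finset.mem_of_mem_erase hi))
  have hjn : j < n := by have := H.npos; omega
  have hmem : ((c j - d) * a j + (a j * a (n-1) + c (n-1) * a (n-1)))
        + ∑ i ∈ E, c i * a i
      ∈ sumset n a (((c j - d) + (a j + c (n-1))) + ∑ i ∈ E, c i) :=
    add_mem (add_mem (nsmul_single hjn (c j - d))
        (add_mem (nsmul_single (show n-1 < n by omega) (a j))
          (nsmul_single (show n-1 < n by omega) (c (n-1)))))
      (mem_of_finsum (F := E) hEsub c)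
  have hval : (c j - d) * a j + (a j * a (n-1) + c (n-1) * a (n-1)) + ∑ i ∈ E, c i * a i = x := by
    have h1 : (c j - d) * a j + d * a j = c j * a j := by
      rw [← Nat.add_mul]
      congr 1
      omega
    rw [H.had, mul_comm (a j) d]
    omega
  have hcnt : ((c j - d) + (a j + c (n-1))) + ∑ i ∈ E, c i = s + a j - d := by omega
  rw [hval, hcnt] at hmem
  exact hmem

lemma min_rep_c0 {x s : ℕ} (hx : x ∈ sumset n a s) (hpos : 0 < x) :
    ∃ c : ℕ → ℕ, (∀ i, n ≤ i → c i = 0) ∧ (∑ i ∈ Finset.range n, c i) = ell n a x ∧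
      (∑ i ∈ Finset.range n, c i * a i) = x ∧ c 0 = 0 := by
  obtain ⟨c, hsupp, hsum, hval⟩ := rep_of_mem (ell_mem hx)
  refine ⟨c, hsupp, hsum, hval, ?_⟩
  by_contra h0
  have hk1 : 1 ≤ ell n a x := by
    rcases Nat.eq_zero_or_pos (ell n a x) with h | h
    · have h2 := ell_mem hx; rw [h, mem_sumset_zero] at h2; omega
    · exact h
  have h3 := H.drop_zero hsum hval (by omega)
  have := ell_le h3
  omega

lemma ell_le_self {x s : ℕ} (hx : x ∈ sumset n a s) : ell n a x ≤ x := by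
  rcases Nat.eq_zero_or_pos x with rfl | hpos
  · have h0 : (0:ℕ) ∈ sumset n a 0 := mem_sumset_zero.2 rfl
    simpa using ell_le h0
  obtain ⟨c, hsupp, hsum, hval, h0⟩ := H.min_rep_c0 hx hpos
  calc ell n a x = ∑ i ∈ Finset.range n, c i := hsum.symm
    _ ≤ ∑ i ∈ Finset.range n, c i * a i := by
        refine Finset.sum_le_sum fun i hi => ?_
        rcases Nat.eq_zero_or_pos i with rfl | hipos
        · simp [h0]
        · exact Nat.le_mul_of_pos_right _ (H.apos hipos (Finset.mem_range.1 hi))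
    _ = x := hval

lemma mem_self {x s t : ℕ} (hx : x ∈ sumset n a s) (ht : x ≤ t) : x ∈ sumset n a t :=
  H.mono (le_trans (H.ell_le_self hx) ht) (ell_mem hx)

lemma bounded_of_no_reduction {c : ℕ → ℕ} {s x : ℕ}
    (hs : ∑ i ∈ Finset.range n, c i = s) (hx : ∑ i ∈ Finset.range n, c i * a i = x)
    (h0 : c 0 = 0) (hd : c (n-1) = 0)
    (hmid : ∀ j, 1 ≤ j → j < n - 1 → c j < d) :
    s ≤ n * (d-1) ∧ x ≤ n * ((d-1) * d) := by
  have hci : ∀ i ∈ Finset.range n, c i ≤ d - 1 := by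
    intro i hi
    have hi' := Finset.mem_range.1 hi
    have hdpos := H.dpos
    rcases Nat.eq_zero_or_pos i with rfl | hipos
    · simp [h0]
    rcases Nat.lt_or_ge i (n-1) with h | h
    · have := hmid i hipos h; omega
    · have : i = n - 1 := by omega
      simp [this, hd]
  constructor
  · calc s = ∑ i ∈ Finset.range n, c i := hs.symm
      _ ≤ ∑ _i ∈ Finset.range n, (d-1) := Finset.sum_le_sum hci
      _ = n * (d-1) := by simp [mul_comm]
  · calc x = ∑ i ∈ Finset.range n, c i * a i := hx.symm
      _ ≤ ∑ _i ∈ Finset.range n, (d-1) * d := Finset.sum_le_sum fun i hi =>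
          Nat.mul_le_mul (hci i hi) (H.ale (Finset.mem_range.1 hi))
      _ = n * ((d-1) * d) := by simp [mul_comm]

/-- Structure step 1: for large `s`, `(s+1)A = sA ∪ (d + sA)`. -/
lemma step_union {s x : ℕ} (hsl : n * d ≤ s) (hx : x ∈ sumset n a (s+1)) :
    x ∈ sumset n a s ∨ ∃ y ∈ sumset n a s, y + d = x := by
  obtain ⟨c, hsupp, hsum, hval⟩ := rep_of_mem hx
  by_cases h0 : 1 ≤ c 0
  · exact Or.inl (by simpa using H.drop_zero hsum hval h0)
  by_cases hd : 1 ≤ c (n-1)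
  · obtain ⟨y, hy, hyd⟩ := H.drop_d hsum hval hd
    exact Or.inr ⟨y, by simpa using hy, hyd⟩
  by_cases hmid : ∃ j, 1 ≤ j ∧ j < n - 1 ∧ d ≤ c j
  · obtain ⟨j, hj1, hj2, hcj⟩ := hmid
    have hmem := H.reduce hj1 hj2 hsum hval hcj
    have haj : a j < d := H.alt hj1 hj2
    exact Or.inl (H.mono (by omega) hmem)
  push_neg at hmid
  exfalso
  have hb := (H.bounded_of_no_reduction hsum hval (by omega) (by omega)
    (fun j hj1 hj2 => hmid j hj1 hj2)).1
  have hdpos := H.dpos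
  have h1 : n * (d - 1) + n * 1 = n * d := by
    rw [← Nat.mul_add]; congr 1; omega
  omega

/-- Structure step 2: for large `s`, `sA ∩ (d + sA) = d + (s-1)A`. -/
lemma step_inter {s x : ℕ} (hsl : n * (d * d) + 1 ≤ s)
    (hx : x ∈ sumset n a s) (hxd : x + d ∈ sumset n a s) : x ∈ sumset n a (s - 1) := by
  have hdpos := H.dpos
  have hpos : 0 < x + d := by omega
  obtain ⟨c, hsupp, hsum, hval, h0⟩ := H.min_rep_c0 hxd hpos
  have hkle : ell n a (x + d) ≤ s := ell_le hxd
  by_cases hd : 1 ≤ c (n-1)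
  · obtain ⟨y, hy, hyd⟩ := H.drop_d hsum hval hd
    have hyx : y = x := by omega
    subst hyx
    exact H.mono (by omega) hy
  have hmid : ∀ j, 1 ≤ j → j < n - 1 → c j < d := by
    intro j hj1 hj2
    by_contra hcj
    push_neg at hcj
    have hmem := H.reduce hj1 hj2 hsum hval hcj
    have hle := ell_le hmem
    have haj : a j < d := H.alt hj1 hj2
    have hck : d ≤ ell n a (x + d) := by
      rw [← hsum]
      calc d ≤ c j := hcj
        _ ≤ ∑ i ∈ Finset.range n, c i :=
          Finset.single_le_sum (fun i _ => Nat.zero_le _) (Finset.mem_range.2 (by omega))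
    omega
  have hbd := (H.bounded_of_no_reduction hsum hval h0 (by omega) hmid).2
  have h2 : (d-1) * d ≤ d * d := Nat.mul_le_mul_right _ (by omega)
  have h3 : n * ((d-1)*d) ≤ n * (d*d) := Nat.mul_le_mul_left _ h2
  exact H.mem_self hx (by omega)

end Hyp

/-! ### the homogeneous semigroup and its levels -/




/-- the image of a set of first coordinates in level `s` -/
def levImg (d s : ℕ) (B : Set ℕ) : Set (ℕ × ℕ) := (fun x => (x, s * d - x)) '' B

def XAP (n d : ℕ) (a : ℕ → ℕ) : ℕ → Set ℕ
  | 0 => {0}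
  | (s+1) => sumset n a (s+1) \ (sumset n a s ∪ (· + d) '' sumset n a s)

def YE (n d : ℕ) (a : ℕ → ℕ) : ℕ → Set ℕ
  | 0 => ∅
  | 1 => ∅
  | (s+2) => (sumset n a (s+1) ∩ (· + d) '' sumset n a (s+1)) \ ((· + d) '' sumset n a s)

namespace Hyp

variable {n d : ℕ} {a : ℕ → ℕ} (H : Hyp n d a)
include H

lemma pair_mem_SS {x y s : ℕ} (hsum : x + y = s * d) (hx : x ∈ sumset n a s) :
    (x, y) ∈ SS n d a := by
  induction s generalizing x y with
  | zero =>
      have hx0 : x = 0 := mem_sumset_zero.1 hx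
      have hy0 : y = 0 := by omega
      subst hx0; subst hy0
      exact AddSubmonoid.zero_mem _
  | succ s ih =>
      obtain ⟨f, hf, rfl⟩ := hx
      rw [Fin.sum_univ_succ] at hsum ⊢
      set x' := ∑ i : Fin s, a (f i.succ) with hx'
      have hx's : x' ∈ sumset n a s := ⟨fun i => f i.succ, fun i => hf i.succ, rfl⟩
      have hx'le : x' ≤ s * d := H.le_bound hx's
      have haf : a (f 0) ≤ d := H.ale (hf 0)
      have hsd : (s+1) * d = s * d + d := by ring
      have h1 : (x', s * d - x') ∈ SS n d a := ih (by omega) hx's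
      have h2 : (a (f 0), d - a (f 0)) ∈ SS n d a :=
        AddSubmonoid.subset_closure ⟨f 0, hf 0, rfl⟩
      have h3 := AddSubmonoid.add_mem _ h2 h1
      have : (a (f 0), d - a (f 0)) + (x', s * d - x') = (a (f 0) + x', y) := by
        have : (d - a (f 0)) + (s * d - x') = y := by omega
        simp [Prod.ext_iff, this]
      rwa [this] at h3

lemma mem_SS {p : ℕ × ℕ} :
    p ∈ SS n d a ↔ ∃ s, p.1 + p.2 = s * d ∧ p.1 ∈ sumset n a s := by
  constructor
  · intro hp
    refine AddSubmonoid.closure_induction ?_ ?_ ?_ hp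
    · rintro q ⟨i, hi, rfl⟩
      exact ⟨1, by simpa using Nat.add_sub_cancel' (H.ale hi), single_mem hi⟩
    · exact ⟨0, by simp, zero_mem_zero⟩
    · rintro q r - - ⟨sq, hq1, hq2⟩ ⟨sr, hr1, hr2⟩
      refine ⟨sq + sr, ?_, add_mem hq2 hr2⟩
      simp only [Prod.fst_add, Prod.snd_add]
      rw [Nat.add_mul]
      omega
  · rintro ⟨s, hsum, hx⟩
    have := H.pair_mem_SS hsum hx
    simpa using this

omit H in
lemma levImg_mem {s : ℕ} {B : Set ℕ} {x : ℕ} (hx : x ∈ B) : (x, s * d - x) ∈ levImg d s B :=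
  ⟨x, hx, rfl⟩

lemma level_eq {q : ℕ × ℕ} (hq : q ∈ SS n d a) {t : ℕ} (hqt : q.1 + q.2 = t * d) :
    q.1 ∈ sumset n a t := by
  obtain ⟨s, hs1, hs2⟩ := H.mem_SS.1 hq
  have : s = t := by
    have hd := H.dpos
    have : s * d = t * d := by omega
    exact Nat.eq_of_mul_eq_mul_right hd this
  subst this
  exact hs2

end Hyp

namespace Hyp

variable {n d : ℕ} {a : ℕ → ℕ} (H : Hyp n d a)
include H

lemma cond1_iff {x y s : ℕ} (hsum : x + y = (s+1) * d) :
    (∃ q ∈ SS n d a, q + (0, d) = (x, y)) ↔ x ∈ sumset n a s := by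
  have hsd : (s+1)*d = s*d + d := by ring
  constructor
  · rintro ⟨q, hq, hqe⟩
    rw [Prod.ext_iff] at hqe
    simp only [Prod.fst_add, Prod.snd_add] at hqe
    obtain ⟨h1, h2⟩ := hqe
    have hlev : q.1 + q.2 = s * d := by omega
    have := H.level_eq hq hlev
    rwa [show q.1 = x by omega] at this
  · intro hxs
    have hle := H.le_bound hxs
    refine ⟨(x, s*d - x), H.pair_mem_SS (by omega) hxs, ?_⟩
    rw [Prod.ext_iff]
    constructor
    · simp
    · simp only [Prod.snd_add]
      omega

lemma cond2_iff {x y s : ℕ} (hsum : x + y = (s+1) * d) :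
    (∃ q ∈ SS n d a, q + (d, 0) = (x, y)) ↔ x ∈ (· + d) '' sumset n a s := by
  have hsd : (s+1)*d = s*d + d := by ring
  constructor
  · rintro ⟨q, hq, hqe⟩
    rw [Prod.ext_iff] at hqe
    simp only [Prod.fst_add, Prod.snd_add] at hqe
    obtain ⟨h1, h2⟩ := hqe
    have hlev : q.1 + q.2 = s * d := by omega
    exact ⟨q.1, H.level_eq hq hlev, by simpa using h1⟩
  · rintro ⟨z, hz, hze⟩
    simp only at hze
    have hle := H.le_bound hz
    refine ⟨(z, s*d - z), H.pair_mem_SS (by omega) hz, ?_⟩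
    rw [Prod.ext_iff]
    simp only [Prod.fst_add, Prod.snd_add]
    omega

lemma cond3_iff {x y s : ℕ} (hsum : x + y = (s+2) * d) :
    (∃ q ∈ SS n d a, q + (d, d) = (x, y)) ↔ x ∈ (· + d) '' sumset n a s := by
  have hsd : (s+2)*d = s*d + d + d := by ring
  constructor
  · rintro ⟨q, hq, hqe⟩
    rw [Prod.ext_iff] at hqe
    simp only [Prod.fst_add, Prod.snd_add] at hqe
    obtain ⟨h1, h2⟩ := hqe
    have hlev : q.1 + q.2 = s * d := by omega
    exact ⟨q.1, H.level_eq hq hlev, by simpa using h1⟩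
  · rintro ⟨z, hz, hze⟩
    simp only at hze
    have hle := H.le_bound hz
    refine ⟨(z, s*d - z), H.pair_mem_SS (by omega) hz, ?_⟩
    rw [Prod.ext_iff]
    simp only [Prod.fst_add, Prod.snd_add]
    omega

lemma APS_eq : APS n d a = ⋃ s, levImg d s (XAP n d a s) := by
  ext p
  obtain ⟨x, y⟩ := p
  simp only [APS, Set.mem_setOf_eq, Set.mem_iUnion]
  constructor
  · rintro ⟨hp, hc1, hc2⟩
    obtain ⟨s, hsum, hx⟩ := H.mem_SS.1 hp
    simp only at hsum hx
    cases s with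
    | zero =>
        have hx0 : x = 0 := mem_sumset_zero.1 hx
        refine ⟨0, 0, rfl, ?_⟩
        rw [Prod.ext_iff]
        simp only
        omega
    | succ s =>
        have hle := H.le_bound hx
        refine ⟨s+1, x, ⟨hx, ?_⟩, ?_⟩
        · rintro (hxs | hxsh)
          · exact hc1 ((H.cond1_iff hsum).2 hxs)
          · exact hc2 ((H.cond2_iff hsum).2 hxsh)
        · rw [Prod.ext_iff]
          simp only
          refine ⟨trivial, ?_⟩
          omega
  · rintro ⟨s, z, hzB, hmap⟩
    rw [Prod.ext_iff] at hmap
    simp only at hmap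
    obtain ⟨rfl, hy⟩ := hmap
    cases s with
    | zero =>
        have hz0 : z = 0 := hzB
        subst hz0
        have hy0 : y = 0 := by omega
        subst hy0
        have hdpos := H.dpos
        refine ⟨H.mem_SS.2 ⟨0, by simp, zero_mem_zero⟩, ?_, ?_⟩
        · rintro ⟨q, hq, hqe⟩
          rw [Prod.ext_iff] at hqe
          simp only [Prod.fst_add, Prod.snd_add] at hqe
          omega
        · rintro ⟨q, hq, hqe⟩
          rw [Prod.ext_iff] at hqe
          simp only [Prod.fst_add, Prod.snd_add] at hqe
          omega
    | succ s =>
        obtain ⟨hz1, hz2⟩ := hzB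
        have hle := H.le_bound hz1
        have hsum : z + y = (s+1) * d := by omega
        refine ⟨H.pair_mem_SS hsum hz1, ?_, ?_⟩
        · intro hcond
          exact hz2 (Or.inl ((H.cond1_iff hsum).1 hcond))
        · intro hcond
          exact hz2 (Or.inr ((H.cond2_iff hsum).1 hcond))

lemma ES_eq : ES n d a = ⋃ s, levImg d s (YE n d a s) := by
  ext p
  obtain ⟨x, y⟩ := p
  simp only [ES, Set.mem_setOf_eq, Set.mem_iUnion]
  constructor
  · rintro ⟨hp, hc1, hc2, hc3⟩
    obtain ⟨s, hsum, hx⟩ := H.mem_SS.1 hp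
    simp only at hsum hx
    have hdpos := H.dpos
    match s, hsum, hx with
    | 0, hsum, hx =>
        exfalso
        obtain ⟨q, hq, hqe⟩ := hc1
        rw [Prod.ext_iff] at hqe
        simp only [Prod.fst_add, Prod.snd_add] at hqe
        omega
    | 1, hsum, hx =>
        exfalso
        obtain ⟨q, hq, hqe⟩ := hc2
        rw [Prod.ext_iff] at hqe
        simp only [Prod.fst_add, Prod.snd_add] at hqe
        have hx0 : x ∈ sumset n a 0 := (H.cond1_iff (s := 0) (by omega)).1 hc1
        have := mem_sumset_zero.1 hx0
        omega
    | (s+2), hsum, hx =>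
        have hle := H.le_bound hx
        have hsd : (s+2)*d = (s+1)*d + d := by ring
        have hsd2 : (s+1+1)*d = (s+1)*d + d := by ring
        refine ⟨s+2, x, ⟨⟨(H.cond1_iff (s := s+1) (by omega)).1 hc1,
          (H.cond2_iff (s := s+1) (by omega)).1 hc2⟩, ?_⟩, ?_⟩
        · intro hsh
          exact hc3 ((H.cond3_iff hsum).2 hsh)
        · rw [Prod.ext_iff]
          simp only
          refine ⟨trivial, ?_⟩
          omega
  · rintro ⟨s, z, hzB, hmap⟩
    rw [Prod.ext_iff] at hmap
    simp only at hmap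
    obtain ⟨rfl, hy⟩ := hmap
    match s, hzB with
    | (s+2), hzB =>
        obtain ⟨⟨hz1, hz2⟩, hz3⟩ := hzB
        have hle : z ≤ (s+1) * d := H.le_bound hz1
        have hsd : (s+2)*d = (s+1)*d + d := by ring
        have hsd2 : (s+1+1)*d = (s+1)*d + d := by ring
        have hsum : z + y = (s+2) * d := by omega
        refine ⟨H.pair_mem_SS hsum (H.mono (by omega) hz1), ?_, ?_, ?_⟩
        · exact (H.cond1_iff (s := s+1) (by omega)).2 hz1
        · exact (H.cond2_iff (s := s+1) (by omega)).2 hz2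
        · intro hcond
          exact hz3 ((H.cond3_iff hsum).1 hcond)

end Hyp

/-! ### counting -/

noncomputable def NN (n d : ℕ) (a : ℕ → ℕ) (s : ℕ) : ℕ := (sumset n a s).ncard

noncomputable def JJ (n d : ℕ) (a : ℕ → ℕ) (s : ℕ) : ℕ :=
  (sumset n a s ∩ (· + d) '' sumset n a s).ncard

namespace Hyp

variable {n d : ℕ} {a : ℕ → ℕ} (H : Hyp n d a)
include H

lemma sumset_finite (s : ℕ) : (sumset n a s).Finite :=
  (Set.finite_Icc 0 (s*d)).subset fun x hx => Set.mem_Icc.2 ⟨Nat.zero_le _, H.le_bound hx⟩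

lemma shift_finite (s : ℕ) : ((· + d) '' sumset n a s).Finite :=
  (H.sumset_finite s).image _

lemma XAP_finite (s : ℕ) : (XAP n d a s).Finite := by
  cases s with
  | zero => exact Set.finite_singleton 0
  | succ s => exact (H.sumset_finite (s+1)).subset Set.diff_subset

lemma YE_finite (s : ℕ) : (YE n d a s).Finite := by
  match s with
  | 0 => exact Set.finite_empty
  | 1 => exact Set.finite_empty
  | (s+2) => exact ((H.sumset_finite (s+1)).subset
      (Set.diff_subset.trans Set.inter_subset_left))

omit H in
lemma levImg_ncard {s : ℕ} (B : Set ℕ) : (levImg d s B).ncard = B.ncard :=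
  Set.ncard_image_of_injOn fun x _ y _ h => congrArg Prod.fst h

omit H in
lemma levImg_finite {s : ℕ} {B : Set ℕ} (hB : B.Finite) : (levImg d s B).Finite := hB.image _

lemma XAP_bound {s x : ℕ} (hx : x ∈ XAP n d a s) : x ≤ s * d := by
  cases s with
  | zero => simp_all [XAP]
  | succ s => exact H.le_bound hx.1

lemma YE_bound {s x : ℕ} (hx : x ∈ YE n d a s) : x ≤ s * d := by
  match s with
  | 0 => simp_all [YE]
  | 1 => simp_all [YE]
  | (s+2) =>
      have h1 : x ∈ sumset n a (s+1) := hx.1.1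
      have := H.le_bound h1
      have h2 : (s+1) * d ≤ (s+2) * d := Nat.mul_le_mul_right _ (by omega)
      omega

lemma NN_zero : NN n d a 0 = 1 := by
  have h : sumset n a 0 = {0} := by
    ext x; simpa using mem_sumset_zero (n := n) (a := a)
  rw [NN, h, Set.ncard_singleton]

lemma JJ_zero : JJ n d a 0 = 0 := by
  have h : sumset n a 0 ∩ (· + d) '' sumset n a 0 = ∅ := by
    ext x
    simp only [Set.mem_inter_iff, Set.mem_image, Set.mem_empty_iff_false, iff_false]
    rintro ⟨h1, z, hz, hze⟩
    have hx0 := mem_sumset_zero.1 h1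
    have hz0 := mem_sumset_zero.1 hz
    have := H.dpos
    omega
  rw [JJ, h, Set.ncard_empty]

lemma NN_upper (s : ℕ) : NN n d a s ≤ s * d + 1 := by
  have h1 : NN n d a s ≤ (Set.Icc 0 (s*d)).ncard :=
    Set.ncard_le_ncard (fun x hx => Set.mem_Icc.2 ⟨Nat.zero_le _, H.le_bound hx⟩)
      (Set.finite_Icc _ _)
  have h2 : (Set.Icc (0:ℕ) (s*d)).ncard = s * d + 1 := by
    rw [← Finset.coe_Icc, Set.ncard_coe_finset, Nat.card_Icc]
    omega
  omega

lemma alpha_rel (s : ℕ) :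
    (XAP n d a (s+1)).ncard + 2 * NN n d a s = NN n d a (s+1) + JJ n d a s := by
  set A := sumset n a s with hA
  set B := (· + d) '' sumset n a s with hB
  have hsubU : A ∪ B ⊆ sumset n a (s+1) := by
    rintro x (hx | ⟨z, hz, rfl⟩)
    · exact H.mono_succ hx
    · exact H.shift_mem hz
  have h1 : (XAP n d a (s+1)).ncard + (A ∪ B).ncard = NN n d a (s+1) :=
    Set.ncard_diff_add_ncard_of_subset hsubU (H.sumset_finite (s+1))
  have h2 : (A ∪ B).ncard + JJ n d a s = NN n d a s + B.ncard :=
    Set.ncard_union_add_ncard_inter A B (H.sumset_finite s) (H.shift_finite s)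
  have h3 : B.ncard = NN n d a s :=
    Set.ncard_image_of_injective _ (add_left_injective d)
  omega

lemma eps_rel (s : ℕ) :
    (YE n d a (s+2)).ncard + NN n d a s = JJ n d a (s+1) := by
  have hsub : (· + d) '' sumset n a s
      ⊆ sumset n a (s+1) ∩ (· + d) '' sumset n a (s+1) := by
    rintro x ⟨z, hz, rfl⟩
    exact ⟨H.shift_mem hz, z, H.mono_succ hz, rfl⟩
  have h1 := Set.ncard_diff_add_ncard_of_subset hsub
    ((H.sumset_finite (s+1)).subset Set.inter_subset_left)
  have h2 : ((· + d) '' sumset n a s).ncard = NN n d a s :=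
    Set.ncard_image_of_injective _ (add_left_injective d)
  rw [h2] at h1
  exact h1

lemma XAP_empty {s : ℕ} (hs : n * d ≤ s) : XAP n d a (s+1) = ∅ := by
  ext x
  simp only [XAP, Set.mem_diff, Set.mem_empty_iff_false, iff_false, not_and, not_not]
  intro hx
  rcases H.step_union hs hx with h | ⟨y, hy, hyd⟩
  · exact Or.inl h
  · exact Or.inr ⟨y, hy, hyd⟩

lemma YE_empty {s : ℕ} (hs : n * (d * d) ≤ s) : YE n d a (s+2) = ∅ := by
  ext x
  simp only [YE, Set.mem_diff, Set.mem_inter_iff, Set.mem_empty_iff_false, iff_false,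
    not_and, not_not]
  rintro ⟨hx1, z, hz, rfl⟩
  have := H.step_inter (s := s+1) (by omega) hz hx1
  exact ⟨z, by simpa using this, rfl⟩

lemma Nrec {s : ℕ} (hs1 : n * d ≤ s) (hs2 : n * (d * d) + 1 ≤ s) :
    NN n d a (s+1) + NN n d a (s-1) = 2 * NN n d a s := by
  set A := sumset n a s with hA
  set B := (· + d) '' sumset n a s with hB
  have hU : sumset n a (s+1) = A ∪ B := by
    ext x
    constructor
    · intro hx
      rcases H.step_union hs1 hx with h | ⟨y, hy, hyd⟩
      · exact Or.inl h
      · exact Or.inr ⟨y, hy, hyd⟩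
    · rintro (hx | ⟨z, hz, rfl⟩)
      · exact H.mono_succ hx
      · exact H.shift_mem hz
  have hI : A ∩ B = (· + d) '' sumset n a (s-1) := by
    ext x
    constructor
    · rintro ⟨hx1, z, hz, rfl⟩
      exact ⟨z, H.step_inter hs2 hz hx1, rfl⟩
    · rintro ⟨z, hz, rfl⟩
      have hz' : z ∈ A := H.mono (by omega) hz
      refine ⟨?_, z, hz', rfl⟩
      have := H.shift_mem hz
      rw [hA]
      have hseq : s - 1 + 1 = s := by omega
      rwa [hseq] at this
  have h2 := Set.ncard_union_add_ncard_inter A B (H.sumset_finite s) (H.shift_finite s)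
  rw [← hU, hI] at h2
  have h3 : B.ncard = NN n d a s :=
    Set.ncard_image_of_injective _ (add_left_injective d)
  have h4 : ((· + d) '' sumset n a (s-1)).ncard = NN n d a (s-1) :=
    Set.ncard_image_of_injective _ (add_left_injective d)
  rw [h3, h4] at h2
  have : NN n d a (s+1) + NN n d a (s-1) = NN n d a s + NN n d a s := h2
  omega

end Hyp

/-! ### Bezout and the conductor -/

lemma nat_bezout {x : ℕ} (y : ℕ) (hx : 0 < x) :
    ∃ p q : ℕ, Nat.gcd x y + q * y = p * x := by
  rcases Nat.eq_zero_or_pos y with rfl | hy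
  · exact ⟨1, 0, by simp⟩
  have hab := Nat.gcd_eq_gcd_ab x y
  set A := Nat.gcdA x y with hA
  set B := Nat.gcdB x y with hB
  set t : ℤ := (A.natAbs : ℤ) + (B.natAbs : ℤ) + 1 with ht
  have hy1 : (1:ℤ) ≤ (y:ℤ) := by exact_mod_cast hy
  have hx1 : (1:ℤ) ≤ (x:ℤ) := by exact_mod_cast hx
  have hAa : -A ≤ (A.natAbs : ℤ) := by
    rw [← Int.abs_eq_natAbs]; exact neg_le_abs A
  have hBa : B ≤ (B.natAbs : ℤ) := by
    rw [← Int.abs_eq_natAbs]; exact le_abs_self B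
  have hApos : (0:ℤ) ≤ (A.natAbs : ℤ) := Int.natCast_nonneg _
  have hBpos : (0:ℤ) ≤ (B.natAbs : ℤ) := Int.natCast_nonneg _
  have h1 : 0 ≤ A + t * y := by nlinarith
  have h2 : 0 ≤ t * x - B := by nlinarith
  refine ⟨(A + t*y).toNat, (t*x - B).toNat, ?_⟩
  have hz : ((Nat.gcd x y : ℕ) : ℤ) + (t*x - B)*y = (A + t*y)*x := by
    rw [hab]; ring
  have hcast : ((Nat.gcd x y + (t*x - B).toNat * y : ℕ) : ℤ)
      = (((A + t*y).toNat * x : ℕ) : ℤ) := by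
    push_cast [Int.toNat_of_nonneg h1, Int.toNat_of_nonneg h2]
    linarith
  exact_mod_cast hcast

lemma finset_bezout (F : Finset ℕ) (b : ℕ → ℕ) (hb : ∀ i ∈ F, 0 < b i) :
    ∃ u v : ℕ → ℕ, F.gcd b + ∑ i ∈ F, v i * b i = ∑ i ∈ F, u i * b i := by
  classical
  induction F using Finset.induction_on with
  | empty => exact ⟨0, 0, by simp⟩
  | @insert i F hi ih =>
      obtain ⟨u, v, huv⟩ := ih fun j hj => hb j (Finset.mem_insert_of_mem hj)
      obtain ⟨p, q, hpq⟩ := nat_bezout (F.gcd b) (hb i (Finset.mem_insert_self i F))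
      refine ⟨fun j => if j = i then p else q * v j, fun j => if j = i then 0 else q * u j, ?_⟩
      have e1 : ∑ j ∈ F, (if j = i then 0 else q * u j) * b j = ∑ j ∈ F, (q * u j) * b j :=
        Finset.sum_congr rfl fun j hj => by rw [if_neg (by rintro rfl; exact hi hj)]
      have e2 : ∑ j ∈ F, (if j = i then p else q * v j) * b j = ∑ j ∈ F, (q * v j) * b j :=
        Finset.sum_congr rfl fun j hj => by rw [if_neg (by rintro rfl; exact hi hj)]
      rw [Finset.gcd_insert, Finset.sum_insert hi, Finset.sum_insert hi]
      beta_reduce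
      rw [if_pos rfl, if_pos rfl, e1, e2]
      have hgcdeq : GCDMonoid.gcd (b i) (F.gcd b) = Nat.gcd (b i) (F.gcd b) := rfl
      rw [hgcdeq]
      have hqu : ∑ j ∈ F, (q * u j) * b j = q * ∑ j ∈ F, u j * b j := by
        rw [Finset.mul_sum]
        exact Finset.sum_congr rfl fun j _ => mul_assoc _ _ _
      have hqv : ∑ j ∈ F, (q * v j) * b j = q * ∑ j ∈ F, v j * b j := by
        rw [Finset.mul_sum]
        exact Finset.sum_congr rfl fun j _ => mul_assoc _ _ _
      have h5 : q * (F.gcd b) + q * ∑ j ∈ F, v j * b j = q * ∑ j ∈ F, u j * b j := by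
        rw [← Nat.mul_add, huv]
      rw [hqu, hqv]
      omega

namespace Hyp

variable {n d : ℕ} {a : ℕ → ℕ} (H : Hyp n d a)
include H

lemma nsmul_mem {x k : ℕ} (hx : x ∈ sumset n a k) (c : ℕ) : c * x ∈ sumset n a (c * k) := by
  induction c with
  | zero => simpa using (mem_sumset_zero (n := n) (a := a)).2 rfl
  | succ c ih =>
      have := add_mem ih hx
      simpa [Nat.succ_mul] using this

lemma exists_one_diff : ∃ U V kU kV : ℕ,
    U ∈ sumset n a kU ∧ V ∈ sumset n a kV ∧ U = V + 1 := by
  obtain ⟨u, v, huv⟩ := finset_bezout (Finset.Icc 1 (n-1)) a (fun i hi => by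
    obtain ⟨h1, h2⟩ := Finset.mem_Icc.1 hi
    exact H.apos h1 (by have := H.npos; omega))
  rw [H.hgcd] at huv
  have hmem : ∀ i ∈ Finset.Icc 1 (n-1), i < n := fun i hi => by
    have := (Finset.mem_Icc.1 hi).2; have := H.npos; omega
  exact ⟨_, _, _, _, mem_of_finsum hmem u, mem_of_finsum hmem v, by omega⟩

lemma exists_conductor : ∃ c₀ : ℕ, ∀ m, c₀ ≤ m → ∀ t, m ≤ t → m ∈ sumset n a t := by
  obtain ⟨U, V, kU, kV, hU, hV, hUV⟩ := H.exists_one_diff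
  rcases Nat.eq_zero_or_pos V with rfl | hVpos
  · refine ⟨0, fun m _ t hmt => ?_⟩
    have h1 : m * U ∈ sumset n a (m * kU) := H.nsmul_mem hU m
    rw [hUV, Nat.zero_add, mul_one] at h1
    exact H.mem_self h1 hmt
  · refine ⟨V * V, fun m hm t hmt => ?_⟩
    set q := m / V with hq
    set r := m % V with hr
    have hmod : V * q + r = m := Nat.div_add_mod m V
    have hrV : r < V := Nat.mod_lt _ hVpos
    have hqV : V ≤ q := (Nat.le_div_iff_mul_le hVpos).2 (by omega)
    have h1 : (q - r) * V ∈ sumset n a ((q - r) * kV) := H.nsmul_mem hV (q - r)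
    have h2 : r * U ∈ sumset n a (r * kU) := H.nsmul_mem hU r
    have h3 := add_mem h1 h2
    have hval : (q - r) * V + r * U = m := by
      have e1 : (q - r) * V = q * V - r * V := by rw [Nat.sub_mul]
      have e2 : r * U = r * V + r := by rw [hUV, Nat.mul_succ]
      have e3 : r * V ≤ q * V := Nat.mul_le_mul_right _ (by omega)
      have e4 : q * V = V * q := Nat.mul_comm _ _
      omega
    rw [hval] at h3
    exact H.mem_self h3 hmt

end Hyp

/-! ### the eventual growth rate -/

lemma seq_lin (f : ℕ → ℕ) (hrec : ∀ k, f (k+2) + f k = 2 * f (k+1)) :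
    ∀ k, f (k+1) + k * f 0 = (k+1) * f 1 := by
  have key : ∀ k, (f (k+1) + k * f 0 = (k+1) * f 1)
      ∧ (f (k+2) + (k+1) * f 0 = (k+2) * f 1) := by
    intro k
    induction k with
    | zero =>
        constructor
        · simp
        · have h := hrec 0
          norm_num at h ⊢
          omega
    | succ k ih =>
        obtain ⟨h1, h2⟩ := ih
        refine ⟨h2, ?_⟩
        have h3 := hrec (k+1)
        have b1 : (k+1) * f 0 = k * f 0 + f 0 := by ring
        have b2 : (k+2) * f 0 = k * f 0 + 2 * f 0 := by ring
        have b3 : (k+1) * f 1 = k * f 1 + f 1 := by ring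
        have b4 : (k+2) * f 1 = k * f 1 + 2 * f 1 := by ring
        have b5 : (k+3) * f 1 = k * f 1 + 3 * f 1 := by ring
        have e1 : k + 1 + 2 = k + 3 := by omega
        have e2 : k + 1 + 1 = k + 2 := by omega
        rw [e1, e2] at h3
        rw [e1, e2]
        omega
  exact fun k => (key k).1

namespace Hyp

variable {n d : ℕ} {a : ℕ → ℕ} (H : Hyp n d a)
include H

lemma interval_mem {c₀ σ : ℕ} (hc : ∀ m, c₀ ≤ m → ∀ t, m ≤ t → m ∈ sumset n a t)
    (hσ : c₀ + d ≤ σ) : ∀ k j, j < (k+1) * d → c₀ + j ∈ sumset n a (σ + k) := by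
  intro k
  induction k with
  | zero =>
      intro j hj
      have hj' : j < d := by omega
      exact hc (c₀+j) (by omega) (σ+0) (by omega)
  | succ k ih =>
      intro j hj
      have hsd : (k+1+1)*d = (k+1)*d + d := by ring
      rcases Nat.lt_or_ge j ((k+1)*d) with h | h
      · exact H.mono_succ (ih j h)
      · have hd1 : 1 * d ≤ (k+1) * d := Nat.mul_le_mul_right _ (by omega)
        have hjd : d ≤ j := by omega
        have hmem := H.shift_mem (ih (j - d) (by omega))
        have heq : c₀ + (j - d) + d = c₀ + j := by omega
        rwa [heq] at hmem

lemma NN_lower {c₀ σ : ℕ} (hc : ∀ m, c₀ ≤ m → ∀ t, m ≤ t → m ∈ sumset n a t)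
    (hσ : c₀ + d ≤ σ) (k : ℕ) : (k+1) * d ≤ NN n d a (σ + k) := by
  classical
  have hsub : ↑(Finset.image (fun j => c₀ + j) (Finset.range ((k+1)*d)))
      ⊆ sumset n a (σ + k) := by
    intro x hx
    simp only [Finset.coe_image, Finset.coe_range, Set.mem_image, Set.mem_Iio] at hx
    obtain ⟨j, hj, rfl⟩ := hx
    exact H.interval_mem hc hσ k j hj
  have h1 := Set.ncard_le_ncard hsub (H.sumset_finite (σ+k))
  rw [Set.ncard_coe_finset, Finset.card_image_of_injective _ (add_right_injective c₀),
    Finset.card_range] at h1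
  exact h1

lemma Nlin {σ : ℕ} (h1 : n * d ≤ σ) (h2 : n * (d * d) + 1 ≤ σ) (k : ℕ) :
    NN n d a (σ+(k+1)) + k * NN n d a σ = (k+1) * NN n d a (σ+1) := by
  have hrec : ∀ m, (fun m => NN n d a (σ+m)) (m+2) + (fun m => NN n d a (σ+m)) m
      = 2 * (fun m => NN n d a (σ+m)) (m+1) := by
    intro m
    simp only []
    have h := H.Nrec (s := σ+m+1) (by omega) (by omega)
    have e1 : σ+m+1+1 = σ+(m+2) := by omega
    have e2 : σ+m+1-1 = σ+m := by omega
    rw [e1, e2] at h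
    have e3 : σ+m+1 = σ+(m+1) := by omega
    rw [e3] at h
    exact h
  have := seq_lin (fun m => NN n d a (σ+m)) hrec k
  simpa using this

lemma delta_eq {c₀ σ : ℕ} (hc : ∀ m, c₀ ≤ m → ∀ t, m ≤ t → m ∈ sumset n a t)
    (h1 : n * d ≤ σ) (h2 : n * (d * d) + 1 ≤ σ) (hσc : c₀ + d ≤ σ) :
    NN n d a (σ+1) = NN n d a σ + d := by
  by_contra hne
  rcases Nat.lt_or_ge (NN n d a (σ+1)) (NN n d a σ + d) with hlt | hge
  · -- too slow growth; contradict the interval lower bound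
    set k := NN n d a σ with hk
    have hl := H.Nlin h1 h2 k
    have hlow := H.NN_lower hc hσc (k+1)
    have hmul : (k+1) * (NN n d a (σ+1) + 1) ≤ (k+1) * (NN n d a σ + d) :=
      Nat.mul_le_mul_left _ (by omega)
    have b1 : (k+1) * (NN n d a (σ+1) + 1) = (k+1) * NN n d a (σ+1) + k + 1 := by ring
    have b2 : (k+1) * (NN n d a σ + d) = k * NN n d a σ + NN n d a σ + k * d + d := by ring
    have b3 : (k+1+1) * d = k * d + 2 * d := by ring
    have hd := H.dpos
    omega
  · -- too fast growth; contradict the upper bound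
    have hgt : NN n d a σ + d + 1 ≤ NN n d a (σ+1) := by omega
    set k := σ * d + 1 with hk
    have hl := H.Nlin h1 h2 k
    have hup := H.NN_upper (σ+(k+1))
    have hexp : (σ+(k+1))*d = σ*d + k*d + d := by ring
    have hmul : (k+1) * (NN n d a σ + d + 1) ≤ (k+1) * NN n d a (σ+1) :=
      Nat.mul_le_mul_left _ hgt
    have b1 : (k+1) * (NN n d a σ + d + 1) = k * NN n d a σ + NN n d a σ + k*d + d + k + 1 := by
      ring
    omega

end Hyp

/-! ### assembling the count -/

lemma ncard_biUnion_of_disjoint {α : Type*} (m : ℕ) (g : ℕ → Set α)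
    (hfin : ∀ s, (g s).Finite)
    (hdisj : ∀ s t, s ≠ t → Disjoint (g s) (g t)) :
    (⋃ s ∈ Finset.range m, g s).Finite ∧
      (⋃ s ∈ Finset.range m, g s).ncard = ∑ s ∈ Finset.range m, (g s).ncard := by
  induction m with
  | zero => simp
  | succ m ih =>
      obtain ⟨ihf, ihc⟩ := ih
      rw [Finset.range_add_one, Finset.set_biUnion_insert, Finset.sum_insert (by simp)]
      have hdis : Disjoint (g m) (⋃ s ∈ Finset.range m, g s) := by
        rw [Set.disjoint_left]
        intro x hx hx'
        simp only [Set.mem_iUnion] at hx'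
        obtain ⟨s, hs, hxs⟩ := hx'
        have hne : m ≠ s := by
          intro h; subst h; simp at hs
        exact Set.disjoint_left.1 (hdisj m s hne) hx hxs
      refine ⟨(hfin m).union ihf, ?_⟩
      rw [Set.ncard_union_eq hdis (hfin m) ihf, ihc]

namespace Hyp

variable {n d : ℕ} {a : ℕ → ℕ} (H : Hyp n d a)
include H

lemma levImg_disjoint (f : ℕ → Set ℕ) (hb : ∀ s x, x ∈ f s → x ≤ s * d) :
    ∀ s t, s ≠ t → Disjoint (levImg d s (f s)) (levImg d t (f t)) := by
  intro s t hst
  rw [Set.disjoint_left]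
  rintro p ⟨x, hx, rfl⟩ ⟨y, hy, hpe⟩
  rw [Prod.ext_iff] at hpe
  simp only at hpe
  obtain ⟨e1, e2⟩ := hpe
  have hxs := hb s x hx
  have hyt := hb t y hy
  have hd := H.dpos
  have : t * d = s * d := by omega
  exact hst (Nat.eq_of_mul_eq_mul_right hd this.symm)

lemma main_count : (APS n d a).Finite ∧ (ES n d a).Finite
    ∧ (APS n d a).ncard = (ES n d a).ncard + d := by
  classical
  obtain ⟨c₀, hc⟩ := H.exists_conductor
  set σ := n * (d * d) + n * d + c₀ + d + 9 with hσ
  have hσ1 : n * d ≤ σ := by omega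
  have hσ2 : n * (d * d) + 1 ≤ σ := by omega
  have hσ3 : c₀ + d ≤ σ := by omega
  -- truncate the unions
  have hXz : ∀ s, σ + 1 ≤ s → XAP n d a s = ∅ := by
    intro s hs
    match s, hs with
    | (t+1), hs => exact H.XAP_empty (by omega)
  have hYz : ∀ s, σ + 2 ≤ s → YE n d a s = ∅ := by
    intro s hs
    match s, hs with
    | (t+2), hs => exact H.YE_empty (by omega)
  have hAPeq : APS n d a = ⋃ s ∈ Finset.range (σ+2), levImg d s (XAP n d a s) := by
    rw [H.APS_eq]
    ext p
    simp only [Set.mem_iUnion]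
    constructor
    · rintro ⟨s, hp⟩
      rcases Nat.lt_or_ge s (σ+2) with h | h
      · exact ⟨s, by simpa using h, hp⟩
      · obtain ⟨x, hx, -⟩ := hp
        rw [hXz s (by omega)] at hx
        exact absurd hx (Set.notMem_empty x)
    · rintro ⟨s, -, hp⟩
      exact ⟨s, hp⟩
  have hESeq : ES n d a = ⋃ s ∈ Finset.range (σ+2), levImg d s (YE n d a s) := by
    rw [H.ES_eq]
    ext p
    simp only [Set.mem_iUnion]
    constructor
    · rintro ⟨s, hp⟩
      rcases Nat.lt_or_ge s (σ+2) with h | h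
      · exact ⟨s, by simpa using h, hp⟩
      · obtain ⟨x, hx, -⟩ := hp
        rw [hYz s (by omega)] at hx
        exact absurd hx (Set.notMem_empty x)
    · rintro ⟨s, -, hp⟩
      exact ⟨s, hp⟩
  -- cardinalities of the unions
  obtain ⟨hfinAP, hcardAP⟩ := ncard_biUnion_of_disjoint (σ+2)
    (fun s => levImg d s (XAP n d a s))
    (fun s => levImg_finite (H.XAP_finite s))
    (H.levImg_disjoint _ (fun s x hx => H.XAP_bound hx))
  obtain ⟨hfinES, hcardES⟩ := ncard_biUnion_of_disjoint (σ+2)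
    (fun s => levImg d s (YE n d a s))
    (fun s => levImg_finite (H.YE_finite s))
    (H.levImg_disjoint _ (fun s x hx => H.YE_bound hx))
  rw [← hAPeq] at hfinAP hcardAP
  rw [← hESeq] at hfinES hcardES
  have hcardAP' : (APS n d a).ncard = ∑ s ∈ Finset.range (σ+2), (XAP n d a s).ncard := by
    rw [hcardAP]
    exact Finset.sum_congr rfl fun s _ => levImg_ncard _
  have hcardES' : (ES n d a).ncard = ∑ s ∈ Finset.range (σ+2), (YE n d a s).ncard := by
    rw [hcardES]
    exact Finset.sum_congr rfl fun s _ => levImg_ncard _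
  refine ⟨hfinAP, hfinES, ?_⟩
  -- sum splitting
  set Sa := ∑ k ∈ Finset.range (σ+1), (XAP n d a (k+1)).ncard with hSa
  set Se := ∑ k ∈ Finset.range σ, (YE n d a (k+2)).ncard with hSe
  have hsplitA : ∑ s ∈ Finset.range (σ+2), (XAP n d a s).ncard = Sa + 1 := by
    rw [Finset.sum_range_succ']
    have : (XAP n d a 0).ncard = 1 := by
      show ({0} : Set ℕ).ncard = 1
      exact Set.ncard_singleton 0
    omega
  have hsplitE : ∑ s ∈ Finset.range (σ+2), (YE n d a s).ncard = Se := by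
    rw [Finset.sum_range_succ']
    have h1 : ∑ i ∈ Finset.range (σ+1), (YE n d a (i+1)).ncard
        = Se + (YE n d a 1).ncard := by
      rw [Finset.sum_range_succ']
    have h2 : (YE n d a 1).ncard = 0 := by
      show (∅ : Set ℕ).ncard = 0
      exact Set.ncard_empty ℕ
    have h3 : (YE n d a 0).ncard = 0 := by
      show (∅ : Set ℕ).ncard = 0
      exact Set.ncard_empty ℕ
    omega
  -- the summed relations
  set P := ∑ k ∈ Finset.range (σ+1), NN n d a k with hP
  set Q := ∑ k ∈ Finset.range (σ+1), NN n d a (k+1) with hQ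
  set R := ∑ k ∈ Finset.range (σ+1), JJ n d a k with hR
  set P' := ∑ k ∈ Finset.range σ, NN n d a k with hP'
  set R' := ∑ k ∈ Finset.range σ, JJ n d a (k+1) with hR'
  have eq1 : Sa + 2 * P = Q + R := by
    have h := Finset.sum_congr rfl (fun k (_ : k ∈ Finset.range (σ+1)) => H.alpha_rel k)
    rwa [Finset.sum_add_distrib, Finset.sum_add_distrib, ← Finset.mul_sum] at h
  have eq2 : Se + P' = R' := by
    have h := Finset.sum_congr rfl (fun k (_ : k ∈ Finset.range σ) => H.eps_rel k)
    rwa [Finset.sum_add_distrib] at h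
  have r1 : P + NN n d a (σ+1) = ∑ k ∈ Finset.range (σ+2), NN n d a k := by
    rw [Finset.sum_range_succ]
  have r2 : NN n d a 0 + Q = ∑ k ∈ Finset.range (σ+2), NN n d a k := by
    rw [Finset.sum_range_succ']
    omega
  have r3 : P' + NN n d a σ = P := by
    rw [hP, Finset.sum_range_succ]
  have r4 : JJ n d a 0 + R' = R := by
    rw [hR, Finset.sum_range_succ']
    omega
  have hN0 := H.NN_zero
  have hJ0 := H.JJ_zero
  have hΔ : NN n d a (σ+1) = NN n d a σ + d := H.delta_eq hc hσ1 hσ2 hσ3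
  omega

end Hyp


end Aux

/-- The Apery set `AP_S` and the exceptional set `E_S` are finite and
`|AP_S| = |E_S| + d`; in particular `|AP_S| ≥ d`. -/
theorem card_APS_eq_card_ES_add_d (n d : ℕ) (a : ℕ → ℕ)
    (hn : 4 ≤ n)
    (ha0 : a 0 = 0)
    (had : a (n - 1) = d)
    (hmono : ∀ i j, i < j → j ≤ n - 1 → a i < a j)
    (hgcd : (Finset.Icc 1 (n - 1)).gcd a = 1) :
    (APS n d a).Finite ∧ (ES n d a).Finite
      ∧ (APS n d a).ncard = (ES n d a).ncard + d
      ∧ d ≤ (APS n d a).ncard := by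
  have H : Hyp n d a := ⟨hn, ha0, had, hmono, hgcd⟩
  obtain ⟨h1, h2, h3⟩ := H.main_count
  exact ⟨h1, h2, h3, by omega⟩


end SumsetsCurve
end
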